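/- arXiv:1510.02062 — 8 statements merged into one kernel-verified Lean document; each statement's English description precedes it below -/
import Mathlib

section
/- If a₁ ≺ a₂ and b₁ ≺ b₂ (majorisation of real vectors of the same length N), then a₁↓ · b₁↓ ≤ a₂↓ · b₂↓ and a₂↓ · b₂↑ ≤ a₁↓ · b₁↑. -/
open Finset

variable {N : ℕ}

/-- Partial sum of the first `k` entries of a vector in `ℝ^N`. -/
def psum (a : Fin N → ℝ) (k : ℕ) : ℝ :=
  ∑ i ∈ Finset.univ.filter (fun i : Fin N => (i : ℕ) < k), a i

/-- `ad` is a non-increasing rearrangement of `a`. -/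
def SortedDescOf (a ad : Fin N → ℝ) : Prop :=
  (∃ σ : Equiv.Perm (Fin N), ad = a ∘ σ) ∧ Antitone ad

/-- `au` is a non-decreasing rearrangement of `a`. -/
def SortedAscOf (a au : Fin N → ℝ) : Prop :=
  (∃ σ : Equiv.Perm (Fin N), au = a ∘ σ) ∧ Monotone au

/-- `a` is majorised by `b`: all partial sums of the non-increasing
rearrangements are dominated, with equality of total sums. -/
def Majorized (a b : Fin N → ℝ) : Prop :=
  ∃ ad bd : Fin N → ℝ, SortedDescOf a ad ∧ SortedDescOf b bd ∧
    (∀ k ≤ N, psum ad k ≤ psum bd k) ∧ (∑ i, a i) = (∑ i, b i)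

/-- Uniqueness of monotone rearrangement. -/
lemma sortedAsc_unique {a f g : Fin N → ℝ} (hf : SortedAscOf a f) (hg : SortedAscOf a g) :
    f = g := by
  obtain ⟨⟨σ, hσ⟩, hfm⟩ := hf
  obtain ⟨⟨τ, hτ⟩, hgm⟩ := hg
  subst hσ hτ
  rw [Tuple.comp_sort_eq_comp_iff_monotone.mpr hfm,
    Tuple.comp_sort_eq_comp_iff_monotone.mpr hgm]

lemma sortedDesc_unique {a f g : Fin N → ℝ} (hf : SortedDescOf a f) (hg : SortedDescOf a g) :
    f = g := by
  have hf' : SortedAscOf (-a) (-f) := ⟨hf.1.imp (fun σ h => by rw [h]; rfl), hf.2.neg⟩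
  have hg' : SortedAscOf (-a) (-g) := ⟨hg.1.imp (fun σ h => by rw [h]; rfl), hg.2.neg⟩
  have := sortedAsc_unique hf' hg'
  funext i
  have := congrFun this i
  simpa using this

/-- Abel summation key lemma, descending weights. -/
lemma abel_key (n : ℕ) (F G C : ℕ → ℝ)
    (hC : ∀ i j, i ≤ j → j < n → C j ≤ C i)
    (hle : ∀ k ≤ n, ∑ i ∈ range k, F i ≤ ∑ i ∈ range k, G i)
    (heq : ∑ i ∈ range n, F i = ∑ i ∈ range n, G i) :
    ∑ i ∈ range n, F i * C i ≤ ∑ i ∈ range n, G i * C i := by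
  have key : (0:ℝ) ≤ ∑ i ∈ range n, C i * (G i - F i) := by
    simp only [← smul_eq_mul]
    rw [Finset.sum_range_by_parts C (fun i => G i - F i) n]
    have h1 : ∑ i ∈ range n, (G i - F i) = 0 := by
      rw [Finset.sum_sub_distrib]; linarith [heq]
    rw [h1, smul_zero, zero_sub, neg_nonneg]
    apply Finset.sum_nonpos
    intro i hi
    rw [Finset.mem_range] at hi
    have hi1 : i + 1 < n := by omega
    have hc : C (i+1) - C i ≤ 0 := by
      have := hC i (i+1) (by omega) hi1
      linarith
    have hs : (0:ℝ) ≤ ∑ j ∈ range (i+1), (G j - F j) := by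
      rw [Finset.sum_sub_distrib]
      have := hle (i+1) (by omega)
      linarith
    simpa [smul_eq_mul] using mul_nonpos_of_nonpos_of_nonneg hc hs
  have : ∑ i ∈ range n, C i * (G i - F i)
      = ∑ i ∈ range n, G i * C i - ∑ i ∈ range n, F i * C i := by
    rw [← Finset.sum_sub_distrib]; congr 1; funext i; ring
  linarith [key, this ▸ key]

lemma abel_key_asc (n : ℕ) (F G C : ℕ → ℝ)
    (hC : ∀ i j, i ≤ j → j < n → C i ≤ C j)
    (hle : ∀ k ≤ n, ∑ i ∈ range k, F i ≤ ∑ i ∈ range k, G i)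
    (heq : ∑ i ∈ range n, F i = ∑ i ∈ range n, G i) :
    ∑ i ∈ range n, G i * C i ≤ ∑ i ∈ range n, F i * C i := by
  have := abel_key n F G (fun i => -C i) (fun i j hij hj => by simpa using hC i j hij hj) hle heq
  simp only [mul_neg, Finset.sum_neg_distrib, neg_le_neg_iff] at this
  exact this

/-- ℕ-extension of a Fin vector. -/
noncomputable def extv (f : Fin N → ℝ) : ℕ → ℝ := fun i => if h : i < N then f ⟨i, h⟩ else 0

lemma psum_eq_range (f : Fin N → ℝ) {k : ℕ} (hk : k ≤ N) :
    psum f k = ∑ i ∈ range k, extv f i := by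
  have h1 : (range N).filter (fun i => i < k) = range k := by
    ext x; simp only [Finset.mem_filter, Finset.mem_range]; omega
  rw [← h1, Finset.sum_filter,
    ← Fin.sum_univ_eq_sum_range (fun i => if i < k then extv f i else 0) N]
  unfold psum
  rw [Finset.sum_filter]
  apply Finset.sum_congr rfl
  intro i _
  simp [extv, i.isLt]

lemma sum_extv (f : Fin N → ℝ) : ∑ i ∈ range N, extv f i = ∑ i, f i := by
  rw [← Fin.sum_univ_eq_sum_range]
  apply Finset.sum_congr rfl
  intro i _
  simp [extv, i.isLt]

lemma sum_sorted {a f : Fin N → ℝ} (h : ∃ σ : Equiv.Perm (Fin N), f = a ∘ σ) :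
    ∑ i, f i = ∑ i, a i := by
  obtain ⟨σ, rfl⟩ := h; exact Equiv.sum_comp σ a

lemma sum_mul_ext (f g : Fin N → ℝ) :
    ∑ i, f i * g i = ∑ i ∈ range N, extv f i * extv g i := by
  rw [← Fin.sum_univ_eq_sum_range (fun i => extv f i * extv g i) N]
  exact Finset.sum_congr rfl (fun i _ => by simp [extv, i.isLt])

lemma extv_anti {f : Fin N → ℝ} (hf : Antitone f) :
    ∀ i j, i ≤ j → j < N → extv f j ≤ extv f i := by
  intro i j hij hj
  have hi : i < N := lt_of_le_of_lt hij hj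
  simp only [extv, dif_pos hi, dif_pos hj]
  exact hf (by exact hij)

lemma extv_mono {f : Fin N → ℝ} (hf : Monotone f) :
    ∀ i j, i ≤ j → j < N → extv f i ≤ extv f j := by
  intro i j hij hj
  have hi : i < N := lt_of_le_of_lt hij hj
  simp only [extv, dif_pos hi, dif_pos hj]
  exact hf (by exact hij)

lemma rev_antitone : Antitone (Fin.rev : Fin N → Fin N) :=
  fun _ _ h => Fin.rev_le_rev.mpr h

lemma asc_of_desc {b bd : Fin N → ℝ} (h : SortedDescOf b bd) :
    SortedAscOf b (bd ∘ Fin.rev) := by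
  obtain ⟨⟨σ, hσ⟩, hanti⟩ := h
  refine ⟨⟨Fin.revPerm.trans σ, ?_⟩, hanti.comp rev_antitone⟩
  subst hσ; rfl

/-- If `a₁ ≺ a₂` and `b₁ ≺ b₂`, then `a₁↓ · b₁↓ ≤ a₂↓ · b₂↓` and
`a₂↓ · b₂↑ ≤ a₁↓ · b₁↑`. -/
theorem majorization_inner_product_corollary
    (a₁ a₂ b₁ b₂ : Fin N → ℝ)
    (ha : Majorized a₁ a₂) (hb : Majorized b₁ b₂)
    (a₁d a₂d b₁d b₂d b₁u b₂u : Fin N → ℝ)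
    (ha₁d : SortedDescOf a₁ a₁d) (ha₂d : SortedDescOf a₂ a₂d)
    (hb₁d : SortedDescOf b₁ b₁d) (hb₂d : SortedDescOf b₂ b₂d)
    (hb₁u : SortedAscOf b₁ b₁u) (hb₂u : SortedAscOf b₂ b₂u) :
    (∑ i, a₁d i * b₁d i) ≤ (∑ i, a₂d i * b₂d i) ∧
      (∑ i, a₂d i * b₂u i) ≤ (∑ i, a₁d i * b₁u i) := by
  obtain ⟨ad, bd, had, hbd, hpa, hsa⟩ := ha
  obtain ⟨cd, dd, hcd, hdd, hpb, hsb⟩ := hb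
  rw [sortedDesc_unique had ha₁d, sortedDesc_unique hbd ha₂d] at hpa
  rw [sortedDesc_unique hcd hb₁d, sortedDesc_unique hdd hb₂d] at hpb
  -- range-sum inequalities
  have hA : ∀ k ≤ N, ∑ i ∈ range k, extv a₁d i ≤ ∑ i ∈ range k, extv a₂d i := fun k hk => by
    rw [← psum_eq_range _ hk, ← psum_eq_range _ hk]; exact hpa k hk
  have hB : ∀ k ≤ N, ∑ i ∈ range k, extv b₁d i ≤ ∑ i ∈ range k, extv b₂d i := fun k hk => by
    rw [← psum_eq_range _ hk, ← psum_eq_range _ hk]; exact hpb k hk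
  have hAeq : ∑ i ∈ range N, extv a₁d i = ∑ i ∈ range N, extv a₂d i := by
    rw [sum_extv, sum_extv, sum_sorted ha₁d.1, sum_sorted ha₂d.1]; exact hsa
  have hBeq : ∑ i ∈ range N, extv b₁d i = ∑ i ∈ range N, extv b₂d i := by
    rw [sum_extv, sum_extv, sum_sorted hb₁d.1, sum_sorted hb₂d.1]; exact hsb
  -- ascending rearrangements are reversed descending ones
  have hb1u : b₁u = b₁d ∘ Fin.rev := sortedAsc_unique hb₁u (asc_of_desc hb₁d)
  have hb2u : b₂u = b₂d ∘ Fin.rev := sortedAsc_unique hb₂u (asc_of_desc hb₂d)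
  constructor
  · -- part 1
    have s1 : ∑ i, a₁d i * b₁d i ≤ ∑ i, a₂d i * b₁d i := by
      rw [sum_mul_ext, sum_mul_ext]
      exact abel_key N _ _ _ (extv_anti hb₁d.2) hA hAeq
    have s2 : ∑ i, a₂d i * b₁d i ≤ ∑ i, a₂d i * b₂d i := by
      have h := abel_key N (extv b₁d) (extv b₂d) (extv a₂d) (extv_anti ha₂d.2) hB hBeq
      have e1 : ∑ i, a₂d i * b₁d i = ∑ i ∈ range N, extv b₁d i * extv a₂d i := by
        rw [← sum_mul_ext]; exact Finset.sum_congr rfl (fun i _ => mul_comm _ _)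
      have e2 : ∑ i, a₂d i * b₂d i = ∑ i ∈ range N, extv b₂d i * extv a₂d i := by
        rw [← sum_mul_ext]; exact Finset.sum_congr rfl (fun i _ => mul_comm _ _)
      rw [e1, e2]; exact h
    exact le_trans s1 s2
  · -- part 2
    have s1 : ∑ i, a₂d i * b₂u i ≤ ∑ i, a₁d i * b₂u i := by
      rw [sum_mul_ext, sum_mul_ext]
      exact abel_key_asc N _ _ _ (extv_mono hb₂u.2) hA hAeq
    have hrev1 : ∑ i, a₁d i * b₂u i = ∑ i, b₂d i * a₁d (Fin.rev i) := by
      rw [hb2u, ← Equiv.sum_comp Fin.revPerm (fun i => a₁d i * (b₂d ∘ Fin.rev) i)]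
      exact Finset.sum_congr rfl (fun i _ => by
        simp [Fin.revPerm, Fin.rev_rev, mul_comm])
    have hmono : Monotone (fun i => a₁d (Fin.rev i)) := ha₁d.2.comp rev_antitone
    have s2 : ∑ i, b₂d i * a₁d (Fin.rev i) ≤ ∑ i, b₁d i * a₁d (Fin.rev i) := by
      rw [sum_mul_ext, sum_mul_ext]
      exact abel_key_asc N _ _ _ (extv_mono hmono) hB hBeq
    have hrev2 : ∑ i, b₁d i * a₁d (Fin.rev i) = ∑ i, a₁d i * b₁u i := by
      rw [hb1u, ← Equiv.sum_comp Fin.revPerm (fun i => b₁d i * a₁d (Fin.rev i))]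
      exact Finset.sum_congr rfl (fun i _ => by
        simp [Fin.revPerm, Fin.rev_rev, mul_comm])
    linarith [s1, hrev1 ▸ s1, s2, hrev2 ▸ s2]
end

section
/- Let ρ be a density operator on a finite-dimensional Hilbert space with eigenvalues p_1↓ ≥ p_2↓ ≥ ... ≥ p_N↓ (N = d_O·d_R), and let |φ_1⟩ ∈ ℂ^{d_O} be a fixed unit vector. Then for every unitary U on ℂ^{d_O} ⊗ ℂ^{d_R}, the probability ⟨φ_1| Tr_R[U ρ U†] |φ_1⟩ is at most Σ_{m=1}^{d_R} p_m↓, and this bound is attained by any unitary mapping the eigenvectors |ψ_m⟩ of ρ associated with the d_R largest eigenvalues to product vectors |φ_1⟩ ⊗ |ξ'_m⟩ for some orthonormal basis {|ξ'_m⟩} of ℂ^{d_R}. -/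
open Finset Matrix

/-- The rank-one projector `|x⟩⟨x|`. -/
noncomputable def outer {n : Type*} (x : n → ℂ) : Matrix n n ℂ :=
  Matrix.of fun a b => x a * star (x b)

/-- Partial trace over the second (reservoir) factor. -/
noncomputable def ptraceR {dO dR : ℕ} (M : Matrix (Fin dO × Fin dR) (Fin dO × Fin dR) ℂ) :
    Matrix (Fin dO) (Fin dO) ℂ :=
  Matrix.of fun i j => ∑ k : Fin dR, M (i, k) (j, k)

/-!
Put `u_n = U ψ_n`, again an orthonormal basis. Then `⟨φ₁| Tr_R[UρU†] |φ₁⟩ = Σ_n p_n c_n` with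
`c_n = Σ_k |⟨φ₁ ⊗ e_k, u_n⟩|²`. Bessel's inequality, applied once to the orthonormal family
`(φ₁ ⊗ e_k)_k` and once to `(u_n)_n`, gives `0 ≤ c_n ≤ 1` and `Σ_n c_n ≤ d_R`; for a non-increasing,
non-negative `p` no such weights beat weight one on the `d_R` largest `p_n`. If `u_m = φ₁ ⊗ ξ'_m`
for `m < d_R`, these `c_m` equal one, which gives the reverse inequality.
-/
lemma sum_mul_le_sum_of_threshold {ι : Type*} [Fintype ι] (s : Finset ι) {p c : ι → ℝ} {τ : ℝ} (hτ : 0 ≤ τ)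
    (hp_mem : ∀ i ∈ s, τ ≤ p i) (hp_not_mem : ∀ i ∉ s, p i ≤ τ)
    (hc0 : ∀ i, 0 ≤ c i) (hc1 : ∀ i, c i ≤ 1) (hc : ∑ i, c i ≤ #s) :
    ∑ i, p i * c i ≤ ∑ i ∈ s, p i := by
  classical
  have hterm : ∀ i, p i * c i - (if i ∈ s then p i else 0)
      ≤ τ * (c i - if i ∈ s then 1 else 0) := by
    intro i
    split_ifs with hi
    · nlinarith [hp_mem i hi, hc1 i]
    · nlinarith [hp_not_mem i hi, hc0 i]
  have hsum := Finset.sum_le_sum fun i (_ : i ∈ univ) => hterm i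
  rw [sum_sub_distrib, ← mul_sum, sum_sub_distrib, sum_ite_mem, sum_boole, univ_inter,
    filter_mem_eq_inter, univ_inter] at hsum
  nlinarith

lemma sum_mul_le_sum_castLE {N K : ℕ} (hK : K ≤ N) {p c : Fin N → ℝ} (hp : Antitone p)
    (hp0 : ∀ n, 0 ≤ p n) (hc0 : ∀ n, 0 ≤ c n) (hc1 : ∀ n, c n ≤ 1) (hc : ∑ n, c n ≤ K) :
    ∑ n, p n * c n ≤ ∑ m : Fin K, p (Fin.castLE hK m) := by
  have hmem : ∀ n : Fin N, n ∈ univ.map (Fin.castLEEmb hK) ↔ (n : ℕ) < K := by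
    intro n
    simp only [mem_map, mem_univ, true_and, Fin.coe_castLEEmb]
    exact ⟨fun ⟨m, hm⟩ => hm ▸ m.isLt, fun h => ⟨⟨n, h⟩, rfl⟩⟩
  rw [show ∑ m : Fin K, p (Fin.castLE hK m) = ∑ n ∈ univ.map (Fin.castLEEmb hK), p n from
    (sum_map univ (Fin.castLEEmb hK) p).symm]
  refine sum_mul_le_sum_of_threshold _ (τ := if h : K < N then p ⟨K, h⟩ else 0)
    ?_ (fun n hn => ?_) (fun n hn => ?_) hc0 hc1 (by rwa [card_map, card_univ, Fintype.card_fin])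
  · split_ifs <;> simp [hp0]
  · rw [hmem] at hn
    split_ifs
    · exact hp (Fin.mk_le_mk.2 hn.le)
    · exact hp0 n
  · rw [hmem, not_lt] at hn
    split_ifs with h
    · exact hp (Fin.mk_le_mk.2 hn)
    · exact absurd n.isLt (by omega)

section Vectors

variable {m n ι : Type*}

lemma outer_eq_vecMulVec (v : n → ℂ) : outer v = vecMulVec v (star v) := rfl

def kronVec (x : m → ℂ) (y : n → ℂ) : m × n → ℂ := fun a => x a.1 * y a.2

variable [Fintype m] [Fintype n]

lemma star_kronVec_dotProduct_kronVec (x x' : m → ℂ) (y y' : n → ℂ) :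
    star (kronVec x y) ⬝ᵥ kronVec x' y' = (star x ⬝ᵥ x') * (star y ⬝ᵥ y') := by
  simp only [dotProduct, sum_mul_sum, Fintype.sum_prod_type, kronVec, Pi.star_apply, star_mul']
  exact sum_congr rfl fun _ _ => sum_congr rfl fun _ _ => by ring

lemma orthonormal_toLp_iff [DecidableEq ι] {v : ι → n → ℂ} :
    Orthonormal ℂ (fun i => WithLp.toLp 2 (v i)) ↔
      ∀ i j, star (v i) ⬝ᵥ v j = if i = j then 1 else 0 := by
  simp only [orthonormal_iff_ite, EuclideanSpace.inner_toLp_toLp, dotProduct_comm]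

lemma sum_normSq_star_dotProduct_le_one [DecidableEq ι] {v : ι → n → ℂ}
    (hv : ∀ i j, star (v i) ⬝ᵥ v j = if i = j then 1 else 0) (s : Finset ι) {x : n → ℂ}
    (hx : star x ⬝ᵥ x = 1) :
    ∑ i ∈ s, Complex.normSq (star (v i) ⬝ᵥ x) ≤ 1 := by
  have hbessel := (orthonormal_toLp_iff.2 hv).sum_inner_products_le (WithLp.toLp 2 x) (s := s)
  rw [@norm_sq_eq_re_inner ℂ] at hbessel
  simpa only [EuclideanSpace.inner_toLp_toLp, dotProduct_comm _ (star _), hx,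
    Complex.normSq_eq_norm_sq, RCLike.one_re] using hbessel

lemma sum_sum_normSq_star_dotProduct_le_card {κ : Type*} [Fintype ι] [Fintype κ]
    [DecidableEq ι] {v : ι → n → ℂ} {w : κ → n → ℂ}
    (hv : ∀ i j, star (v i) ⬝ᵥ v j = if i = j then 1 else 0)
    (hw : ∀ k, star (w k) ⬝ᵥ w k = 1) :
    ∑ i, ∑ k, Complex.normSq (star (w k) ⬝ᵥ v i) ≤ Fintype.card κ := by
  rw [sum_comm]
  calc ∑ k, ∑ i, Complex.normSq (star (w k) ⬝ᵥ v i)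
      = ∑ k, ∑ i, Complex.normSq (star (v i) ⬝ᵥ w k) := by
        simp only [star_dotProduct (v _), Complex.star_def, Complex.normSq_conj]
    _ ≤ ∑ _k : κ, 1 := sum_le_sum fun k _ => sum_normSq_star_dotProduct_le_one hv univ (hw k)
    _ = Fintype.card κ := by simp

lemma star_mulVec_dotProduct_mulVec [DecidableEq n] {U : Matrix n n ℂ}
    (hU : U ∈ unitaryGroup n ℂ) (x y : n → ℂ) :
    star (U *ᵥ x) ⬝ᵥ U *ᵥ y = star x ⬝ᵥ y := by
  rw [star_mulVec, dotProduct_mulVec, vecMul_vecMul, ← star_eq_conjTranspose,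
    mem_unitaryGroup_iff'.mp hU, vecMul_one]

lemma mul_outer_mul_conjTranspose (U : Matrix n n ℂ) (v : n → ℂ) :
    U * outer v * Uᴴ = outer (U *ᵥ v) := by
  rw [outer_eq_vecMulVec, outer_eq_vecMulVec, mul_vecMulVec, vecMulVec_mul, star_mulVec]

lemma star_dotProduct_outer_mulVec (w v : n → ℂ) :
    star w ⬝ᵥ outer v *ᵥ w = Complex.normSq (star w ⬝ᵥ v) := by
  rw [outer_eq_vecMulVec, vecMulVec_mulVec, Complex.normSq_eq_conj_mul_self, star_dotProduct v]
  simp [dotProduct_smul, mul_comm]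

variable [DecidableEq n]

/-- `reducedProb φ v = ⟨φ| Tr_R |v⟩⟨v| |φ⟩`, computed as `‖(⟨φ| ⊗ 1) v‖²`. -/
noncomputable def reducedProb (φ : m → ℂ) (v : m × n → ℂ) : ℝ :=
  ∑ k, Complex.normSq (star (kronVec φ (Pi.single k 1)) ⬝ᵥ v)

lemma reducedProb_nonneg (φ : m → ℂ) (v : m × n → ℂ) : 0 ≤ reducedProb φ v :=
  sum_nonneg fun _ _ => Complex.normSq_nonneg _

lemma star_kronVec_single_dotProduct_kronVec_single {φ : m → ℂ} (hφ : star φ ⬝ᵥ φ = 1)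
    (k l : n) :
    star (kronVec φ (Pi.single k 1)) ⬝ᵥ kronVec φ (Pi.single l 1) = if k = l then 1 else 0 := by
  simp only [star_kronVec_dotProduct_kronVec, hφ, one_mul, Pi.star_single, star_one,
    single_one_dotProduct, Pi.single_apply]

lemma reducedProb_le_one {φ : m → ℂ} (hφ : star φ ⬝ᵥ φ = 1) {v : m × n → ℂ}
    (hv : star v ⬝ᵥ v = 1) : reducedProb φ v ≤ 1 :=
  sum_normSq_star_dotProduct_le_one (star_kronVec_single_dotProduct_kronVec_single hφ) univ hv

lemma sum_reducedProb_le_card [Fintype ι] [DecidableEq ι] {φ : m → ℂ} (hφ : star φ ⬝ᵥ φ = 1)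
    {v : ι → m × n → ℂ} (hv : ∀ i j, star (v i) ⬝ᵥ v j = if i = j then 1 else 0) :
    ∑ i, reducedProb φ (v i) ≤ Fintype.card n :=
  sum_sum_normSq_star_dotProduct_le_card hv fun k =>
    (star_kronVec_single_dotProduct_kronVec_single hφ k k).trans (if_pos rfl)

lemma reducedProb_kronVec {φ : m → ℂ} (hφ : star φ ⬝ᵥ φ = 1) (ξ : n → ℂ) :
    reducedProb φ (kronVec φ ξ) = (star ξ ⬝ᵥ ξ).re := by
  simp only [reducedProb, star_kronVec_dotProduct_kronVec, hφ, one_mul, Pi.star_single, star_one,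
    single_one_dotProduct]
  simp_rw [dotProduct, Pi.star_apply, Complex.star_def, ← Complex.normSq_eq_conj_mul_self,
    ← Complex.ofReal_sum, Complex.ofReal_re]

end Vectors

lemma star_dotProduct_ptraceR_mulVec {dO dR : ℕ} (φ : Fin dO → ℂ)
    (M : Matrix (Fin dO × Fin dR) (Fin dO × Fin dR) ℂ) :
    star φ ⬝ᵥ ptraceR M *ᵥ φ =
      ∑ k, star (kronVec φ (Pi.single k 1)) ⬝ᵥ M *ᵥ kronVec φ (Pi.single k 1) := by
  simp only [ptraceR, kronVec, dotProduct, mulVec, Fintype.sum_prod_type, of_apply, Pi.star_apply,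
    Pi.single_apply, mul_ite, mul_one, mul_zero, apply_ite star, star_zero, ite_mul, zero_mul,
    sum_ite_irrel, sum_const_zero, sum_ite_eq', mem_univ, if_true, mul_sum, sum_mul]
  exact (sum_congr rfl fun _ _ => sum_comm).trans sum_comm

lemma re_star_dotProduct_ptraceR_sum_outer_mulVec {dO dR : ℕ} {ι : Type*} [Fintype ι]
    (φ : Fin dO → ℂ) (p : ι → ℝ) (v : ι → Fin dO × Fin dR → ℂ) :
    (star φ ⬝ᵥ ptraceR (∑ i, (p i : ℂ) • outer (v i)) *ᵥ φ).re = ∑ i, p i * reducedProb φ (v i) := by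
  simp only [star_dotProduct_ptraceR_mulVec, sum_mulVec, smul_mulVec, dotProduct_sum,
    dotProduct_smul, star_dotProduct_outer_mulVec, reducedProb, mul_sum, Complex.re_sum,
    smul_eq_mul, ← Complex.ofReal_mul, Complex.ofReal_re]
  exact sum_comm

theorem max_probability_information_erasure_general {dO dR : ℕ} (hdO : 0 < dO)
    (p : Fin (dO * dR) → ℝ) (hp_anti : Antitone p) (hp_nonneg : ∀ n, 0 ≤ p n)
    (ψ : Fin (dO * dR) → (Fin dO × Fin dR → ℂ))
    (hψ : ∀ n m, star (ψ n) ⬝ᵥ ψ m = if n = m then 1 else 0)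
    (φ1 : Fin dO → ℂ) (hφ1 : star φ1 ⬝ᵥ φ1 = 1)
    (ρ : Matrix (Fin dO × Fin dR) (Fin dO × Fin dR) ℂ)
    (hρ : ρ = ∑ n, (p n : ℂ) • outer (ψ n)) :
    (∀ U ∈ Matrix.unitaryGroup (Fin dO × Fin dR) ℂ,
      (star φ1 ⬝ᵥ (ptraceR (U * ρ * Uᴴ)).mulVec φ1).re
        ≤ ∑ m : Fin dR, p (Fin.castLE (Nat.le_mul_of_pos_left dR hdO) m)) ∧
    (∀ U ∈ Matrix.unitaryGroup (Fin dO × Fin dR) ℂ,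
      ∀ ξ' : Fin dR → (Fin dR → ℂ),
      (∀ i j, star (ξ' i) ⬝ᵥ ξ' j = if i = j then 1 else 0) →
      (∀ m : Fin dR,
        U.mulVec (ψ (Fin.castLE (Nat.le_mul_of_pos_left dR hdO) m))
          = fun a => φ1 a.1 * ξ' m a.2) →
      (star φ1 ⬝ᵥ (ptraceR (U * ρ * Uᴴ)).mulVec φ1).re
        = ∑ m : Fin dR, p (Fin.castLE (Nat.le_mul_of_pos_left dR hdO) m)) := by
  have hK : dR ≤ dO * dR := Nat.le_mul_of_pos_left dR hdO
  have hprob : ∀ U : Matrix (Fin dO × Fin dR) (Fin dO × Fin dR) ℂ,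
      (star φ1 ⬝ᵥ ptraceR (U * ρ * Uᴴ) *ᵥ φ1).re =
      ∑ n, p n * reducedProb φ1 (U *ᵥ ψ n) := by
    intro U
    rw [hρ, mul_sum, sum_mul]
    simp_rw [Matrix.mul_smul, Matrix.smul_mul, mul_outer_mul_conjTranspose]
    exact re_star_dotProduct_ptraceR_sum_outer_mulVec φ1 p _
  have hupper : ∀ U ∈ unitaryGroup (Fin dO × Fin dR) ℂ,
      (star φ1 ⬝ᵥ ptraceR (U * ρ * Uᴴ) *ᵥ φ1).re ≤ ∑ m : Fin dR, p (Fin.castLE hK m) := by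
    intro U hU
    have hu : ∀ n m, star (U *ᵥ ψ n) ⬝ᵥ U *ᵥ ψ m = if n = m then 1 else 0 := fun n m =>
      (star_mulVec_dotProduct_mulVec hU _ _).trans (hψ n m)
    rw [hprob]
    exact sum_mul_le_sum_castLE hK hp_anti hp_nonneg (fun _ => reducedProb_nonneg _ _)
      (fun n => reducedProb_le_one hφ1 ((hu n n).trans (if_pos rfl)))
      (by simpa only [Fintype.card_fin] using sum_reducedProb_le_card hφ1 hu)
  refine ⟨hupper, fun U hU ξ' hξ' hmap => (hupper U hU).antisymm ?_⟩
  have hmax : ∀ m, reducedProb φ1 (U *ᵥ ψ (Fin.castLE hK m)) = 1 := fun m => by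
    rw [hmap m]
    exact (reducedProb_kronVec hφ1 (ξ' m)).trans (by rw [hξ' m m, if_pos rfl, Complex.one_re])
  rw [hprob]
  calc ∑ m, p (Fin.castLE hK m)
      = ∑ n ∈ univ.map (Fin.castLEEmb hK), p n * reducedProb φ1 (U *ᵥ ψ n) := by
        simp only [sum_map, Fin.coe_castLEEmb, hmax, mul_one]
    _ ≤ ∑ n, p n * reducedProb φ1 (U *ᵥ ψ n) :=
        sum_le_univ_sum_of_nonneg fun n => mul_nonneg (hp_nonneg n) (reducedProb_nonneg _ _)

/-- **Maximal probability of information erasure**: for a density operator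
`ρ = Σ_n p_n↓ |ψ_n⟩⟨ψ_n|` on `ℂ^{d_O} ⊗ ℂ^{d_R}` with non-increasing spectrum,
and a fixed unit vector `|φ_1⟩`, the probability `⟨φ_1|Tr_R[UρU†]|φ_1⟩` is at
most the sum of the `d_R` largest eigenvalues, for every unitary `U`; and the
bound is attained by any unitary sending the top `d_R` eigenvectors to
`|φ_1⟩ ⊗ |ξ'_m⟩` for an orthonormal basis `{|ξ'_m⟩}` of `ℂ^{d_R}`. -/
theorem max_probability_information_erasure {dO dR : ℕ} (hdO : 0 < dO)
    (p : Fin (dO * dR) → ℝ) (hp_anti : Antitone p) (hp_nonneg : ∀ n, 0 ≤ p n)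
    (hp_sum : ∑ n, p n = 1)
    (ψ : Fin (dO * dR) → (Fin dO × Fin dR → ℂ))
    (hψ : ∀ n m, star (ψ n) ⬝ᵥ ψ m = if n = m then 1 else 0)
    (φ1 : Fin dO → ℂ) (hφ1 : star φ1 ⬝ᵥ φ1 = 1)
    (ρ : Matrix (Fin dO × Fin dR) (Fin dO × Fin dR) ℂ)
    (hρ : ρ = ∑ n, (p n : ℂ) • outer (ψ n)) :
    (∀ U ∈ Matrix.unitaryGroup (Fin dO × Fin dR) ℂ,
      (star φ1 ⬝ᵥ (ptraceR (U * ρ * Uᴴ)).mulVec φ1).re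
        ≤ ∑ m : Fin dR, p (Fin.castLE (Nat.le_mul_of_pos_left dR hdO) m)) ∧
    (∀ U ∈ Matrix.unitaryGroup (Fin dO × Fin dR) ℂ,
      ∀ ξ' : Fin dR → (Fin dR → ℂ),
      (∀ i j, star (ξ' i) ⬝ᵥ ξ' j = if i = j then 1 else 0) →
      (∀ m : Fin dR,
        U.mulVec (ψ (Fin.castLE (Nat.le_mul_of_pos_left dR hdO) m))
          = fun a => φ1 a.1 * ξ' m a.2) →
      (star φ1 ⬝ᵥ (ptraceR (U * ρ * Uᴴ)).mulVec φ1).re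
        = ∑ m : Fin dR, p (Fin.castLE (Nat.le_mul_of_pos_left dR hdO) m)) :=
  max_probability_information_erasure_general hdO p hp_anti hp_nonneg ψ hψ φ1 hφ1 ρ hρ
end

section
/- Let ρ_O be a density operator on ℂ^{d_O} with largest eigenvalue o_1↓ and second-largest o_2↓, and let the reservoir Gibbs probabilities be r_m↓ = e^{-β λ_m↑}/Z with λ_1↑ ≤ ... ≤ λ_{d_R}↑. Then the maximum erasure probability p^max_{φ_1} = Σ_{m=1}^{d_R} p_m↓ (sum of the d_R largest products o_l↓ r_m↓) strictly exceeds o_1↓ if and only if o_2↓ r_1↓ > o_1↓ r_{d_R}↓, equivalently o_1↓/o_2↓ < e^{β(λ_{d_R}↑ − λ_1↑)}. -/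
/-!
The sum of the `d_R` largest joint products is the largest sum of `o_l r_m` over `d_R`-element
sets of pairs `(l, m)`, and it is attained by any such set whose entries dominate all the others.
The first row `{o₁ r_m}` sums to `o₁`. If `o₂ r₁ ≤ o₁ r_{d_R}` it dominates, so `p^max = o₁`;
otherwise trading its smallest entry `o₁ r_{d_R}` for `o₂ r₁` gives a set whose sum exceeds `o₁`.
For Gibbs weights `r₁ / r_{d_R} = e^{β(λ_{d_R} - λ₁)}`, which gives the second form.
-/

open Finset

/-- The non-increasing rearrangement of a vector in `ℝ^n`. -/
noncomputable def sortDesc {n : ℕ} (x : Fin n → ℝ) : Fin n → ℝ :=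
  fun i => (x ∘ Tuple.sort x) i.rev

theorem Finset.sum_le_sum_of_card_eq_of_forall_le {ι M : Type*} [AddCommMonoid M] [LinearOrder M]
    [IsOrderedCancelAddMonoid M] {x : ι → M} {S T : Finset ι} (hcard : #T = #S)
    (hS : ∀ a ∈ S, ∀ b ∉ S, x b ≤ x a) : ∑ b ∈ T, x b ≤ ∑ a ∈ S, x a := by
  classical
  rw [← sum_sdiff_le_sum_sdiff]
  have hcard' : #(T \ S) = #(S \ T) := card_sdiff_comm hcard
  rcases (S \ T).eq_empty_or_nonempty with hST | hST
  · rw [hST, card_empty, card_eq_zero] at hcard'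
    rw [hST, hcard']
  · have hle : ∀ b ∈ T \ S, x b ≤ (S \ T).inf' hST x := fun b hb =>
      le_inf' hST x fun a ha => hS a (mem_sdiff.1 ha).1 b (mem_sdiff.1 hb).2
    calc ∑ b ∈ T \ S, x b ≤ #(T \ S) • (S \ T).inf' hST x := sum_le_card_nsmul _ _ _ hle
      _ = #(S \ T) • (S \ T).inf' hST x := by rw [hcard']
      _ ≤ ∑ a ∈ S \ T, x a := card_nsmul_le_sum _ _ _ fun a ha => inf'_le x ha

noncomputable def sumTop {n : ℕ} (x : Fin n → ℝ) (k : ℕ) : ℝ :=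
  ∑ i ∈ univ.filter (fun i : Fin n => (i : ℕ) < k), sortDesc x i

theorem exists_sum_eq_sumTop {n : ℕ} (x : Fin n → ℝ) {k : ℕ} (hk : k ≤ n) :
    ∃ J : Finset (Fin n), #J = k ∧ (∀ a ∈ J, ∀ b ∉ J, x b ≤ x a) ∧
      ∑ j ∈ J, x j = sumTop x k := by
  set σ := Tuple.sort x
  set J : Finset (Fin n) := univ.filter fun j => n - k ≤ σ.symm j
  have hmem : ∀ i : Fin n, σ i.rev ∈ J ↔ (i : ℕ) < k := fun i => by
    simp only [J, mem_filter, mem_univ, true_and, Equiv.symm_apply_apply, Fin.val_rev]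
    omega
  have hmem' : ∀ j, (σ.symm j).rev ∈ univ.filter (fun i : Fin n => (i : ℕ) < k) ↔ j ∈ J :=
    fun j => by rw [mem_filter, ← hmem]; simp
  refine ⟨J, ?_, ?_, ?_⟩
  · rw [← min_eq_right hk, ← Fin.card_filter_val_lt]
    exact card_nbij' (fun j => (σ.symm j).rev) (fun i => σ i.rev) (fun j => (hmem' j).2)
      (fun i hi => (hmem i).2 (mem_filter.1 hi).2) (fun j _ => by simp) (fun i _ => by simp)
  · intro a ha b hb
    simp only [J, mem_filter, mem_univ, true_and, not_le] at ha hb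
    simpa [σ] using Tuple.monotone_sort x (Fin.le_iff_val_le_val.2 (hb.le.trans ha))
  · exact sum_nbij' (fun j => (σ.symm j).rev) (fun i => σ i.rev) (fun j => (hmem' j).2)
      (fun i hi => (hmem i).2 (mem_filter.1 hi).2) (fun j _ => by simp) (fun i _ => by simp)
      (fun j _ => by simp [sortDesc, σ])

section Reindex

variable {ι : Type*} {n : ℕ} (e : ι ≃ Fin n) (y : ι → ℝ)

theorem sum_le_sumTop_comp_symm (T : Finset ι) : ∑ i ∈ T, y i ≤ sumTop (y ∘ e.symm) #T := by
  have hsum : ∑ i ∈ T, y i = ∑ j ∈ T.map e.toEmbedding, (y ∘ e.symm) j := by simp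
  have hk : #T ≤ n := by simpa using card_le_univ (T.map e.toEmbedding)
  obtain ⟨J, hJ, hJdom, hJsum⟩ := exists_sum_eq_sumTop (y ∘ e.symm) hk
  rw [hsum, ← hJsum]
  exact sum_le_sum_of_card_eq_of_forall_le (by rw [hJ, card_map]) hJdom

theorem sumTop_comp_symm_eq_sum {T : Finset ι} (hT : ∀ a ∈ T, ∀ b ∉ T, y b ≤ y a) :
    sumTop (y ∘ e.symm) #T = ∑ i ∈ T, y i := by
  have hsum : ∑ i ∈ T, y i = ∑ j ∈ T.map e.toEmbedding, (y ∘ e.symm) j := by simp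
  have hk : #T ≤ n := by simpa using card_le_univ (T.map e.toEmbedding)
  obtain ⟨J, hJ, -, hJsum⟩ := exists_sum_eq_sumTop (y ∘ e.symm) hk
  refine le_antisymm ?_ (sum_le_sumTop_comp_symm e y T)
  rw [hsum, ← hJsum]
  refine sum_le_sum_of_card_eq_of_forall_le (by rw [hJ, card_map]) fun a ha b hb => ?_
  simp only [Finset.mem_map_equiv] at ha hb
  exact hT _ ha _ hb

end Reindex

section JointSpectrum

variable {dO dR n : ℕ} {o : Fin (dO + 2) → ℝ} {r : Fin (dR + 1) → ℝ}

theorem sum_singleton_product_mul (hr : ∑ m, r m = 1) (l : Fin (dO + 2)) :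
    ∑ p ∈ {l} ×ˢ univ, o p.1 * r p.2 = o l := by
  simp only [sum_product, sum_singleton, ← mul_sum, hr, mul_one]

theorem sumTop_mul_eq_of_le (e : Fin (dO + 2) × Fin (dR + 1) ≃ Fin n) (ho : Antitone o)
    (ho0 : ∀ l, 0 ≤ o l) (hr : Antitone r) (hr0 : ∀ m, 0 ≤ r m) (hr1 : ∑ m, r m = 1)
    (h : o 1 * r 0 ≤ o 0 * r (Fin.last dR)) :
    sumTop ((fun p => o p.1 * r p.2) ∘ e.symm) (dR + 1) = o 0 := by
  set row : Finset (Fin (dO + 2) × Fin (dR + 1)) := {0} ×ˢ univ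
  have hrow : #row = dR + 1 := by simp [row]
  -- every entry outside the first row is at most `o₂ r₁ ≤ o₁ r_{d_R}`, the least entry of that row
  have hdom : ∀ a ∈ row, ∀ b ∉ row, o b.1 * r b.2 ≤ o a.1 * r a.2 := by
    intro a ha b hb
    simp only [row, mem_product, mem_singleton, mem_univ, and_true] at ha hb
    calc o b.1 * r b.2 ≤ o 1 * r 0 :=
          mul_le_mul (ho (Fin.one_le_of_ne_zero hb)) (hr (Fin.zero_le _)) (hr0 _) (ho0 _)
      _ ≤ o 0 * r (Fin.last dR) := h
      _ ≤ o a.1 * r a.2 := by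
        rw [ha]
        exact mul_le_mul_of_nonneg_left (hr (Fin.le_last _)) (ho0 _)
  have := sumTop_comp_symm_eq_sum e _ hdom
  rwa [hrow, sum_singleton_product_mul hr1] at this

theorem lt_sumTop_mul_of_lt (e : Fin (dO + 2) × Fin (dR + 1) ≃ Fin n) (hr1 : ∑ m, r m = 1)
    (h : o 0 * r (Fin.last dR) < o 1 * r 0) :
    o 0 < sumTop ((fun p => o p.1 * r p.2) ∘ e.symm) (dR + 1) := by
  -- the first row with its smallest entry traded for `o₂ r₁`
  set T : Finset (Fin (dO + 2) × Fin (dR + 1)) := insert (1, 0) ({0} ×ˢ univ.erase (Fin.last dR))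
  have hnot : ((1, 0) : Fin (dO + 2) × Fin (dR + 1)) ∉ {0} ×ˢ univ.erase (Fin.last dR) := by
    simp
  have hT : #T = dR + 1 := by
    rw [card_insert_of_notMem hnot]
    simp
  have hsum : ∑ p ∈ T, o p.1 * r p.2 = o 1 * r 0 + o 0 * (1 - r (Fin.last dR)) := by
    rw [sum_insert hnot, sum_product, sum_singleton]
    simp only [← mul_sum, sum_erase_eq_sub (mem_univ _), hr1, mul_sub]
  calc o 0 < ∑ p ∈ T, o p.1 * r p.2 := by rw [hsum]; linarith
    _ ≤ sumTop ((fun p => o p.1 * r p.2) ∘ e.symm) #T := sum_le_sumTop_comp_symm e _ T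
    _ = sumTop ((fun p => o p.1 * r p.2) ∘ e.symm) (dR + 1) := by rw [hT]

theorem lt_sumTop_mul_iff (e : Fin (dO + 2) × Fin (dR + 1) ≃ Fin n) (ho : Antitone o)
    (ho0 : ∀ l, 0 ≤ o l) (hr : Antitone r) (hr0 : ∀ m, 0 ≤ r m) (hr1 : ∑ m, r m = 1) :
    o 0 < sumTop ((fun p => o p.1 * r p.2) ∘ e.symm) (dR + 1) ↔
      o 0 * r (Fin.last dR) < o 1 * r 0 := by
  refine ⟨fun hlt => ?_, lt_sumTop_mul_of_lt e hr1⟩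
  by_contra! hle
  exact hlt.ne' (sumTop_mul_eq_of_le e ho ho0 hr hr0 hr1 hle)

end JointSpectrum

section Gibbs

open Real

variable {ι : Type*} [Fintype ι] (β : ℝ) (lam : ι → ℝ)

noncomputable def gibbs (m : ι) : ℝ :=
  exp (-β * lam m) / ∑ k, exp (-β * lam k)

theorem gibbs_pos (m : ι) : 0 < gibbs β lam m :=
  div_pos (exp_pos _) (sum_pos (fun _ _ => exp_pos _) ⟨m, mem_univ m⟩)

theorem sum_gibbs [Nonempty ι] : ∑ m, gibbs β lam m = 1 := by
  simp only [gibbs]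
  rw [← sum_div, div_self (sum_pos (fun _ _ => exp_pos _) univ_nonempty).ne']

theorem antitone_gibbs [Preorder ι] (hβ : 0 ≤ β) (hlam : Monotone lam) :
    Antitone (gibbs β lam) := fun a b hab =>
  div_le_div_of_nonneg_right (exp_le_exp.2 (by nlinarith [hlam hab]))
    (sum_nonneg fun _ _ => (exp_pos _).le)

theorem gibbs_div_gibbs (a b : ι) : gibbs β lam a / gibbs β lam b = exp (β * (lam b - lam a)) := by
  rw [gibbs, gibbs, div_div_div_cancel_right₀ (sum_pos (fun _ _ => exp_pos _) ⟨a, mem_univ a⟩).ne',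
    ← exp_sub]
  ring_nf

end Gibbs

/-- **Condition for non-trivial erasure**: with object spectrum `o↓` (strictly
positive, non-increasing) and reservoir Gibbs probabilities
`r_m = e^{-βλ_m}/Z` for non-decreasing energies `λ`, the maximum erasure
probability `p^max = Σ_{m<d_R} p_m↓` (sum of the `d_R` largest joint products)
strictly exceeds `o_1↓` iff `o_2↓ r_1↓ > o_1↓ r_{d_R}↓`, equivalently
`o_1↓/o_2↓ < e^{β(λ_{d_R} − λ_1)}`. -/
theorem nontrivial_erasure_condition {dO dR : ℕ} (hdO : 2 ≤ dO) (hdR : 0 < dR)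
    (o : Fin dO → ℝ) (ho_anti : Antitone o) (ho_pos : ∀ l, 0 < o l)
    (lam : Fin dR → ℝ) (hlam : Monotone lam) (β : ℝ) (hβ : 0 < β)
    (r : Fin dR → ℝ)
    (hr : ∀ m, r m = Real.exp (-β * lam m) / ∑ k, Real.exp (-β * lam k))
    (pvec : Fin (dO * dR) → ℝ)
    (hpvec : ∀ n, pvec n = o (finProdFinEquiv.symm n).1 * r (finProdFinEquiv.symm n).2)
    (pmax : ℝ)
    (hpmax : pmax = ∑ m ∈ Finset.univ.filter (fun m : Fin (dO * dR) => (m : ℕ) < dR),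
      sortDesc pvec m) :
    (pmax > o ⟨0, by omega⟩ ↔
      o ⟨1, by omega⟩ * r ⟨0, hdR⟩ > o ⟨0, by omega⟩ * r ⟨dR - 1, by omega⟩) ∧
    (pmax > o ⟨0, by omega⟩ ↔
      o ⟨0, by omega⟩ / o ⟨1, by omega⟩
        < Real.exp (β * (lam ⟨dR - 1, by omega⟩ - lam ⟨0, hdR⟩))) := by
  obtain ⟨dO, rfl⟩ := Nat.exists_eq_add_of_le' hdO
  obtain ⟨dR, rfl⟩ := Nat.exists_eq_add_of_le' hdR
  obtain rfl : r = gibbs β lam := funext hr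
  obtain rfl : pvec = (fun p => o p.1 * gibbs β lam p.2) ∘ finProdFinEquiv.symm := funext hpvec
  have key : pmax > o 0 ↔ o 1 * gibbs β lam 0 > o 0 * gibbs β lam (Fin.last dR) :=
    hpmax ▸ lt_sumTop_mul_iff finProdFinEquiv ho_anti (fun l => (ho_pos l).le)
      (antitone_gibbs β lam hβ.le hlam) (fun m => (gibbs_pos β lam m).le) (sum_gibbs β lam)
  refine ⟨key, key.trans ?_⟩
  rw [← gibbs_div_gibbs, div_lt_div_iff₀ (ho_pos _) (gibbs_pos _ _ _), mul_comm (gibbs _ _ _)]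
  exact Iff.rfl
end

section
/- Let ρ be a density operator on ℂ^{d_O} ⊗ ℂ^{d_R} with simple spectrum p_1↓ > ... > p_{d_O d_R}↓ and eigenvectors |ψ_n⟩, and H_R Hermitian with non-decreasing eigenvalues λ_m↑ and eigenbasis |ξ_m⟩. Among all unitaries U, the heat ΔQ = Tr[H_R(Tr_O[UρU†] − ρ_R)] is minimised by any U satisfying U|ψ_n⟩ = |φ_l^m⟩ ⊗ |ξ_m⟩ for n ∈ {(m−1)d_O+1, ..., m d_O} (where for each m, {|φ_l^m⟩}_l is an orthonormal basis of ℂ^{d_O}); i.e. the d_O largest eigenvalue-eigenvectors are sent to the lowest reservoir level, the next d_O to the second-lowest, and so on. -/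
open Finset Matrix

/-- Partial trace over the first (object) factor. -/
noncomputable def ptraceO {dO dR : ℕ}
    (M : Matrix (Fin dO × Fin dR) (Fin dO × Fin dR) ℂ) :
    Matrix (Fin dR) (Fin dR) ℂ :=
  Matrix.of fun k l => ∑ i : Fin dO, M (i, k) (i, l)

/-!
Write `ρ = Ψ diag(p) Ψ†` and `H_R = Ξ diag(λ) Ξ†` with `Ψ`, `Ξ` unitary. Then
`Tr[H_R Tr_O[UρU†]] = ∑_{(i,m), x} λ_m p_x |W_{(i,m),x}|²` with `W = (1 ⊗ Ξ)† U Ψ` unitary, so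
`B = |W|²` is doubly stochastic. The reservoir populations `r_m = ∑_{i,x} p_x B_{(i,m),x}` obey
`∑_{m ≤ k} r_m ≤ ∑_{m ≤ k} ∑_l p_{(m,l)}`: the left side is `∑_x p_x T_x` with `0 ≤ T ≤ 1` and
`∑ T` the number of eigenvalues in the blocks `m ≤ k`, and such a sum is largest when `T` sits on
the largest eigenvalues. The right side is the population vector produced by `U₀`, and Abel
summation against the non-decreasing `λ` turns this majorisation into `ΔQ(U₀) ≤ ΔQ(U)`.
-/

open scoped Kronecker

theorem exists_separating_value {ι : Type*} [Fintype ι] (S : Finset ι) (p : ι → ℝ)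
    (hp : ∀ x ∈ S, ∀ y ∉ S, p y ≤ p x) : ∃ c, (∀ x ∈ S, c ≤ p x) ∧ ∀ y ∉ S, p y ≤ c := by
  rcases S.eq_empty_or_nonempty with rfl | hS
  · exact ⟨∑ x, |p x|, by simp, fun y _ => (le_abs_self _).trans
      (single_le_sum (fun x _ => abs_nonneg (p x)) (mem_univ y))⟩
  · exact ⟨S.inf' hS p, fun x hx => inf'_le p hx,
      fun y hy => le_inf' hS p fun x hx => hp x hx y hy⟩

theorem sum_mul_le_sum_of_separated {ι : Type*} [Fintype ι] [DecidableEq ι] (S : Finset ι)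
    {p T : ι → ℝ} (hp : ∀ x ∈ S, ∀ y ∉ S, p y ≤ p x) (hT0 : ∀ x, 0 ≤ T x) (hT1 : ∀ x, T x ≤ 1)
    (hT : ∑ x, T x = #S) : ∑ x, p x * T x ≤ ∑ x ∈ S, p x := by
  obtain ⟨c, hcS, hcSc⟩ := exists_separating_value S p hp
  have hterm (x : ι) : (p x - c) * (T x - if x ∈ S then 1 else 0) ≤ 0 := by
    by_cases hx : x ∈ S
    · simpa [hx] using
        mul_nonpos_of_nonneg_of_nonpos (sub_nonneg.2 (hcS x hx)) (sub_nonpos.2 (hT1 x))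
    · simpa [hx] using mul_nonpos_of_nonpos_of_nonneg (sub_nonpos.2 (hcSc x hx)) (hT0 x)
  have hsum := sum_nonpos fun x (_ : x ∈ univ) => hterm x
  simp only [mul_sub, sub_mul, sum_sub_distrib, ← mul_sum, mul_ite, mul_one, mul_zero,
    sum_ite_mem, univ_inter, sum_const, nsmul_eq_mul, hT] at hsum
  linarith

theorem sum_range_mul_nonneg_of_sum_Iic_nonpos {f g : ℕ → ℝ} {n : ℕ}
    (hf : ∀ i, i + 1 < n → f i ≤ f (i + 1)) (hg : ∀ k, k + 1 < n → ∑ i ∈ Iic k, g i ≤ 0)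
    (htot : ∑ i ∈ range n, g i = 0) : 0 ≤ ∑ i ∈ range n, f i * g i := by
  have hparts := sum_range_by_parts f g n
  simp only [smul_eq_mul, htot, mul_zero, zero_sub] at hparts
  rw [hparts, neg_nonneg]
  refine sum_nonpos fun i hi => mul_nonpos_of_nonneg_of_nonpos ?_ ?_
  · exact sub_nonneg.2 (hf i (by grind))
  · rw [Nat.range_succ_eq_Iic]
    exact hg i (by grind)

theorem Fin.sum_mul_le_sum_mul_of_sum_Iic_le {n : ℕ} {w a b : Fin n → ℝ} (hw : Monotone w)
    (hab : ∀ k, ∑ i ∈ Iic k, a i ≤ ∑ i ∈ Iic k, b i) (htot : ∑ i, a i = ∑ i, b i) :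
    ∑ i, w i * b i ≤ ∑ i, w i * a i := by
  let extend (v : Fin n → ℝ) (j : ℕ) : ℝ := if h : j < n then v ⟨j, h⟩ else 0
  have hext (v : Fin n → ℝ) (i : Fin n) : extend v i = v i := by simp [extend]
  have hsum (v : Fin n → ℝ) : ∑ i, v i = ∑ j ∈ range n, extend v j := by simp [sum_range, hext]
  have hIic (v : Fin n → ℝ) (k : Fin n) : ∑ i ∈ Iic k, v i = ∑ j ∈ Iic (k : ℕ), extend v j := by
    rw [← Fin.map_valEmbedding_Iic, sum_map]
    simp [hext]
  have key := sum_range_mul_nonneg_of_sum_Iic_nonpos (f := extend w) (g := extend (a - b)) (n := n)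
    (fun i hi => by simpa [extend, hi, (by omega : i < n)] using hw (Fin.mk_le_mk.2 i.le_succ))
    (fun k hk => by simpa [← hIic (a - b) ⟨k, by omega⟩] using hab ⟨k, by omega⟩)
    (by rw [← hsum, Pi.sub_def, sum_sub_distrib, htot, sub_self])
  rw [sum_range] at key
  simpa [hext, mul_sub] using key

section DoublyStochastic

variable {κ : Type*} [Fintype κ] [DecidableEq κ]

theorem sum_Iic_sum_mul_le_of_doublyStochastic {β : Type*} [LinearOrder β] [Fintype β]
    [LocallyFiniteOrderBot β] {p : β × κ → ℝ} (hp : ∀ x y, x.1 < y.1 → p y ≤ p x)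
    {B : κ × β → β × κ → ℝ} (hB : ∀ y x, 0 ≤ B y x) (hrow : ∀ y, ∑ x, B y x = 1)
    (hcol : ∀ x, ∑ y, B y x = 1) (k : β) :
    ∑ m ∈ Iic k, ∑ i, ∑ x, p x * B (i, m) x ≤ ∑ m ∈ Iic k, ∑ l, p (m, l) := by
  have hT1 (x : β × κ) : ∑ y ∈ univ ×ˢ Iic k, B y x ≤ 1 :=
    hcol x ▸ sum_le_univ_sum_of_nonneg fun y => hB y x
  have hT : ∑ x, ∑ y ∈ univ ×ˢ Iic k, B y x = #(Iic k ×ˢ (univ : Finset κ)) := by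
    rw [sum_comm, sum_congr rfl fun y _ => hrow y]
    simp [mul_comm]
  have key := sum_mul_le_sum_of_separated (Iic k ×ˢ univ)
    (fun x hx y hy => hp x y ((mem_Iic.1 (mem_product.1 hx).1).trans_lt (by simpa using hy)))
    (fun x => sum_nonneg fun y _ => hB y x) hT1 hT
  rw [sum_product] at key
  refine le_of_eq_of_le ?_ key
  simp only [mul_sum, sum_product]
  rw [sum_comm, sum_congr rfl fun i _ => sum_comm]
  exact sum_comm

theorem sum_mul_le_sum_mul_of_doublyStochastic {n : ℕ} {p : Fin n × κ → ℝ}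
    (hp : ∀ x y, x.1 < y.1 → p y ≤ p x) {w : Fin n → ℝ} (hw : Monotone w)
    {B : κ × Fin n → Fin n × κ → ℝ} (hB : ∀ y x, 0 ≤ B y x) (hrow : ∀ y, ∑ x, B y x = 1)
    (hcol : ∀ x, ∑ y, B y x = 1) :
    ∑ x, p x * w x.1 ≤ ∑ y, w y.2 * ∑ x, p x * B y x := by
  have hlhs : ∑ x, p x * w x.1 = ∑ m, w m * ∑ l, p (m, l) := by
    simp only [Fintype.sum_prod_type, mul_sum, mul_comm]
  have hrhs : ∑ y, w y.2 * ∑ x, p x * B y x = ∑ m, w m * ∑ i, ∑ x, p x * B (i, m) x := by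
    simp only [Fintype.sum_prod_type_right, mul_sum]
  have htot : ∑ m, ∑ i, ∑ x, p x * B (i, m) x = ∑ m, ∑ l, p (m, l) := by
    rw [← Fintype.sum_prod_type_right (fun y => ∑ x, p x * B y x), sum_comm,
      ← Fintype.sum_prod_type]
    simp only [← mul_sum, hcol, mul_one]
  rw [hlhs, hrhs]
  exact Fin.sum_mul_le_sum_mul_of_sum_Iic_le hw
    (sum_Iic_sum_mul_le_of_doublyStochastic hp hB hrow hcol) htot

end DoublyStochastic

theorem conjTranspose_mul_self_eq_one_of_orthonormal {ι n : Type*} [Fintype n] [DecidableEq ι]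
    {v : ι → n → ℂ} (hv : ∀ i j, star (v i) ⬝ᵥ v j = if i = j then 1 else 0) :
    ((of v)ᵀ)ᴴ * (of v)ᵀ = 1 := by
  ext i j
  simpa [mul_apply, one_apply, dotProduct] using hv i j

theorem sum_smul_outer {ι n : Type*} [Fintype ι] [DecidableEq ι] (c : ι → ℂ) (v : ι → n → ℂ) :
    ∑ i, c i • outer (v i) = (of v)ᵀ * diagonal c * ((of v)ᵀ)ᴴ := by
  ext a b
  simp only [outer, Matrix.sum_apply, Matrix.smul_apply, of_apply, smul_eq_mul, mul_apply,
    diagonal_apply, transpose_apply, conjTranspose_apply, mul_ite, mul_zero, sum_ite_eq', mem_univ,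
    if_true]
  exact sum_congr rfl fun _ _ => by ring

section Normalization

variable {m n : Type*} [Fintype m] [DecidableEq n]

theorem sum_normSq_col_eq_one_of_conjTranspose_mul_self {W : Matrix m n ℂ} (hW : Wᴴ * W = 1)
    (x : n) : ∑ y, Complex.normSq (W y x) = 1 := by
  have hdiag := congr_fun (congr_fun hW x) x
  simp only [mul_apply, conjTranspose_apply, one_apply_eq] at hdiag
  apply Complex.ofReal_injective
  push_cast
  simpa [Complex.normSq_eq_conj_mul_self] using hdiag

theorem sum_normSq_row_eq_one_of_conjTranspose_mul_self [Fintype n] [DecidableEq m] (e : m ≃ n)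
    {W : Matrix m n ℂ} (hW : Wᴴ * W = 1) (y : m) : ∑ x, Complex.normSq (W y x) = 1 := by
  have hW' : Wᴴᴴ * Wᴴ = 1 := by
    rw [conjTranspose_conjTranspose]
    exact (mul_eq_one_comm_of_equiv e).2 hW
  simpa using sum_normSq_col_eq_one_of_conjTranspose_mul_self hW' y

end Normalization

theorem trace_mul_ptraceO {dO dR : ℕ} (A : Matrix (Fin dR) (Fin dR) ℂ)
    (M : Matrix (Fin dO × Fin dR) (Fin dO × Fin dR) ℂ) :
    (A * ptraceO M).trace = ((1 ⊗ₖ A) * M).trace := by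
  simp only [trace, ptraceO, diag_apply, mul_apply, of_apply, kroneckerMap_apply, one_apply,
    ite_mul, one_mul, zero_mul, Fintype.sum_prod_type, sum_ite_irrel, sum_const_zero, sum_ite_eq,
    mem_univ, if_true, mul_sum]
  rw [sum_congr rfl fun i _ => sum_comm]
  exact sum_comm

theorem re_trace_diagonal_mul_conj {m n : Type*} [Fintype m] [Fintype n] [DecidableEq m]
    [DecidableEq n] (a : m → ℝ) (b : n → ℝ) (W : Matrix m n ℂ) :
    (diagonal (fun y => (a y : ℂ)) * (W * diagonal (fun x => (b x : ℂ)) * Wᴴ)).trace.re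
      = ∑ y, a y * ∑ x, b x * Complex.normSq (W y x) := by
  suffices h : (diagonal (fun y => (a y : ℂ)) * (W * diagonal (fun x => (b x : ℂ)) * Wᴴ)).trace
      = ((∑ y, a y * ∑ x, b x * Complex.normSq (W y x) : ℝ) : ℂ) by
    rw [h, Complex.ofReal_re]
  push_cast
  simp only [trace, diag_apply, mul_apply, diagonal_apply, ite_mul, zero_mul, mul_ite, mul_zero,
    sum_ite_eq, sum_ite_eq', mem_univ, if_true, conjTranspose_apply,
    Complex.normSq_eq_conj_mul_self, RCLike.star_def]
  simp only [mul_sum]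
  exact sum_congr rfl fun y _ => sum_congr rfl fun x _ => by ring

theorem one_kronecker_mul_diagonal_mul_conjTranspose {dO dR : ℕ} (Ξ : Matrix (Fin dR) (Fin dR) ℂ)
    (w : Fin dR → ℂ) :
    (1 : Matrix (Fin dO) (Fin dO) ℂ) ⊗ₖ (Ξ * diagonal w * Ξᴴ)
      = (1 ⊗ₖ Ξ) * diagonal (fun y => w y.2) * (1 ⊗ₖ Ξ)ᴴ := by
  have hdiag : diagonal (fun y : Fin dO × Fin dR => w y.2) = 1 ⊗ₖ diagonal w := by
    rw [← diagonal_one, diagonal_kronecker_diagonal]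
    simp only [one_mul]
  rw [hdiag, conjTranspose_kronecker, conjTranspose_one, ← mul_kronecker_mul,
    ← mul_kronecker_mul, Matrix.one_mul, Matrix.one_mul]

theorem re_trace_mul_ptraceO_conj {dO dR : ℕ} {ι : Type*} [Fintype ι] [DecidableEq ι]
    (Ξ : Matrix (Fin dR) (Fin dR) ℂ) (w : Fin dR → ℝ) (A : Matrix (Fin dO × Fin dR) ι ℂ)
    (p : ι → ℝ) :
    (Ξ * diagonal (fun m => (w m : ℂ)) * Ξᴴ
        * ptraceO (A * diagonal (fun x => (p x : ℂ)) * Aᴴ)).trace.re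
      = ∑ y, w y.2 * ∑ x, p x
          * Complex.normSq ((((1 : Matrix (Fin dO) (Fin dO) ℂ) ⊗ₖ Ξ)ᴴ * A) y x) := by
  rw [trace_mul_ptraceO, one_kronecker_mul_diagonal_mul_conjTranspose]
  refine (congrArg Complex.re ?_).trans
    (re_trace_diagonal_mul_conj (fun y : Fin dO × Fin dR => w y.2) p _)
  rw [Matrix.mul_assoc (1 ⊗ₖ Ξ), Matrix.mul_assoc (1 ⊗ₖ Ξ), trace_mul_comm, conjTranspose_mul,
    conjTranspose_conjTranspose]
  simp only [Matrix.mul_assoc]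

theorem sum_mul_sum_mul_normSq_of_product_columns {ι : Type*} [Fintype ι] {dO dR : ℕ}
    {ξ : Fin dR → Fin dR → ℂ} (hξ : ∀ i j, star (ξ i) ⬝ᵥ ξ j = if i = j then 1 else 0)
    {g : ι → Fin dR} {φ : ι → Fin dO → ℂ} (hφ : ∀ x, ∑ i, Complex.normSq (φ x i) = 1)
    {A : Matrix (Fin dO × Fin dR) ι ℂ} (hA : ∀ a x, A a x = φ x a.1 * ξ (g x) a.2)
    (w : Fin dR → ℝ) (p : ι → ℝ) :
    ∑ y, w y.2 * ∑ x, p x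
        * Complex.normSq ((((1 : Matrix (Fin dO) (Fin dO) ℂ) ⊗ₖ (of ξ)ᵀ)ᴴ * A) y x)
      = ∑ x, p x * w (g x) := by
  have hentry (y : Fin dO × Fin dR) (x : ι) :
      (((1 : Matrix (Fin dO) (Fin dO) ℂ) ⊗ₖ (of ξ)ᵀ)ᴴ * A) y x
        = if y.2 = g x then φ x y.1 else 0 := by
    simp only [mul_apply, conjTranspose_apply, kroneckerMap_apply, one_apply, transpose_apply,
      of_apply, hA, Fintype.sum_prod_type, ite_mul, one_mul, zero_mul, apply_ite star, star_zero,
      sum_ite_irrel, sum_const_zero, sum_ite_eq', mem_univ, if_true]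
    calc ∑ k, star (ξ y.2 k) * (φ x y.1 * ξ (g x) k) = φ x y.1 * (star (ξ y.2) ⬝ᵥ ξ (g x)) := by
          simp only [dotProduct, mul_sum, Pi.star_apply]
          exact sum_congr rfl fun k _ => by ring
      _ = if y.2 = g x then φ x y.1 else 0 := by rw [hξ, mul_ite, mul_one, mul_zero]
  simp only [hentry, apply_ite Complex.normSq, Complex.normSq_zero, mul_sum]
  rw [sum_comm]
  refine sum_congr rfl fun x _ => ?_
  simp [Fintype.sum_prod_type_right, mul_ite, ← mul_sum, hφ, mul_comm]

theorem min_heat_dissipation_general {dO dR : ℕ}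
    (p : Fin dR × Fin dO → ℝ)
    (hp_lex : ∀ m m' : Fin dR, ∀ l l' : Fin dO,
      (m < m' ∨ (m = m' ∧ l < l')) → p (m', l') < p (m, l))
    (ψ : Fin dR × Fin dO → (Fin dO × Fin dR → ℂ))
    (hψ : ∀ x y, star (ψ x) ⬝ᵥ ψ y = if x = y then 1 else 0)
    (lam : Fin dR → ℝ) (hlam : Monotone lam)
    (ξ : Fin dR → (Fin dR → ℂ))
    (hξ : ∀ i j, star (ξ i) ⬝ᵥ ξ j = if i = j then 1 else 0)
    (HR : Matrix (Fin dR) (Fin dR) ℂ)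
    (hHR : HR = ∑ m, (lam m : ℂ) • outer (ξ m))
    (ρ : Matrix (Fin dO × Fin dR) (Fin dO × Fin dR) ℂ)
    (hρ : ρ = ∑ x, (p x : ℂ) • outer (ψ x))
    (U₀ : Matrix (Fin dO × Fin dR) (Fin dO × Fin dR) ℂ)
    (φ : Fin dR → Fin dO → (Fin dO → ℂ))
    (hφ : ∀ m, ∀ l l', star (φ m l) ⬝ᵥ φ m l' = if l = l' then 1 else 0)
    (hU₀map : ∀ m l, U₀.mulVec (ψ (m, l)) = fun a => φ m l a.1 * ξ m a.2) :
    ∀ U ∈ Matrix.unitaryGroup (Fin dO × Fin dR) ℂ,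
      ((HR * (ptraceO (U₀ * ρ * U₀ᴴ) - ptraceO ρ)).trace).re
        ≤ ((HR * (ptraceO (U * ρ * Uᴴ) - ptraceO ρ)).trace).re := by
  intro U hU
  set Ψ : Matrix (Fin dO × Fin dR) (Fin dR × Fin dO) ℂ := (of ψ)ᵀ
  set V : Matrix (Fin dO × Fin dR) (Fin dO × Fin dR) ℂ := 1 ⊗ₖ (of ξ)ᵀ
  have hconj (A : Matrix (Fin dO × Fin dR) (Fin dO × Fin dR) ℂ) :
      A * ρ * Aᴴ = A * Ψ * diagonal (fun x => (p x : ℂ)) * (A * Ψ)ᴴ := by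
    rw [hρ, sum_smul_outer, conjTranspose_mul]
    simp only [Matrix.mul_assoc, Ψ]
  have hV : V ∈ unitary _ := kronecker_mem_unitary (one_mem _)
    (mem_unitaryGroup_iff'.2 (conjTranspose_mul_self_eq_one_of_orthonormal hξ))
  have hW : (Vᴴ * (U * Ψ))ᴴ * (Vᴴ * (U * Ψ)) = 1 := by
    have hVV : V * Vᴴ = 1 := hV.2
    have hUU : Uᴴ * U = 1 := hU.1
    simp only [conjTranspose_mul, conjTranspose_conjTranspose, Matrix.mul_assoc]
    rw [← Matrix.mul_assoc V, hVV, Matrix.one_mul, ← Matrix.mul_assoc Uᴴ, hUU, Matrix.one_mul]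
    exact conjTranspose_mul_self_eq_one_of_orthonormal hψ
  have hφ1 (x : Fin dR × Fin dO) : ∑ i, Complex.normSq (φ x.1 x.2 i) = 1 := by
    simpa using sum_normSq_col_eq_one_of_conjTranspose_mul_self
      (conjTranspose_mul_self_eq_one_of_orthonormal (hφ x.1)) x.2
  have hU₀Ψ (a : Fin dO × Fin dR) (x : Fin dR × Fin dO) :
      (U₀ * Ψ) a x = φ x.1 x.2 a.1 * ξ x.1 a.2 := by
    simpa [mul_apply, mulVec, dotProduct, Ψ] using congr_fun (hU₀map x.1 x.2) a
  rw [mul_sub, mul_sub, trace_sub, trace_sub, Complex.sub_re, Complex.sub_re,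
    sub_le_sub_iff_right, hconj, hconj, hHR, sum_smul_outer, re_trace_mul_ptraceO_conj,
    re_trace_mul_ptraceO_conj, sum_mul_sum_mul_normSq_of_product_columns hξ hφ1 hU₀Ψ]
  exact sum_mul_le_sum_mul_of_doublyStochastic (fun x y h => (hp_lex _ _ _ _ (Or.inl h)).le) hlam
    (fun _ _ => Complex.normSq_nonneg _)
    (sum_normSq_row_eq_one_of_conjTranspose_mul_self (Equiv.prodComm _ _) hW)
    (sum_normSq_col_eq_one_of_conjTranspose_mul_self hW)

/-- **Minimising the heat dissipation**: for a density operator with simple,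
strictly decreasing spectrum `p` (indexed by `(m, l)` in lexicographic order)
on `ℂ^{d_O} ⊗ ℂ^{d_R}` and reservoir Hamiltonian `H_R` with non-decreasing
eigenvalues `λ_m` and eigenbasis `|ξ_m⟩`, any unitary `U₀` sending the `m`-th
block of `d_O` eigenvectors (in decreasing order of eigenvalue) to
`|φ_l^m⟩ ⊗ |ξ_m⟩` minimises the heat
`ΔQ(U) = Tr[H_R(Tr_O[UρU†] − ρ_R)]` over all unitaries `U`. -/
theorem min_heat_dissipation {dO dR : ℕ}
    (p : Fin dR × Fin dO → ℝ) (hp_nonneg : ∀ x, 0 ≤ p x)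
    (hp_sum : ∑ x, p x = 1)
    (hp_lex : ∀ m m' : Fin dR, ∀ l l' : Fin dO,
      (m < m' ∨ (m = m' ∧ l < l')) → p (m', l') < p (m, l))
    (ψ : Fin dR × Fin dO → (Fin dO × Fin dR → ℂ))
    (hψ : ∀ x y, star (ψ x) ⬝ᵥ ψ y = if x = y then 1 else 0)
    (lam : Fin dR → ℝ) (hlam : Monotone lam)
    (ξ : Fin dR → (Fin dR → ℂ))
    (hξ : ∀ i j, star (ξ i) ⬝ᵥ ξ j = if i = j then 1 else 0)
    (HR : Matrix (Fin dR) (Fin dR) ℂ)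
    (hHR : HR = ∑ m, (lam m : ℂ) • outer (ξ m))
    (ρ : Matrix (Fin dO × Fin dR) (Fin dO × Fin dR) ℂ)
    (hρ : ρ = ∑ x, (p x : ℂ) • outer (ψ x))
    (U₀ : Matrix (Fin dO × Fin dR) (Fin dO × Fin dR) ℂ)
    (hU₀ : U₀ ∈ Matrix.unitaryGroup (Fin dO × Fin dR) ℂ)
    (φ : Fin dR → Fin dO → (Fin dO → ℂ))
    (hφ : ∀ m, ∀ l l', star (φ m l) ⬝ᵥ φ m l' = if l = l' then 1 else 0)
    (hU₀map : ∀ m l, U₀.mulVec (ψ (m, l)) = fun a => φ m l a.1 * ξ m a.2) :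
    ∀ U ∈ Matrix.unitaryGroup (Fin dO × Fin dR) ℂ,
      ((HR * (ptraceO (U₀ * ρ * U₀ᴴ) - ptraceO ρ)).trace).re
        ≤ ((HR * (ptraceO (U * ρ * Uᴴ) - ptraceO ρ)).trace).re :=
  min_heat_dissipation_general p hp_lex ψ hψ lam hlam ξ hξ HR hHR ρ hρ U₀ φ hφ hU₀map
end

section
/- Consider a qudit in the maximally mixed state ρ_O = (1/d_O)·1 coupled to a harmonic-oscillator reservoir (infinite ladder with level spacing ω, ground energy 0) in a Gibbs state at inverse temperature β. Under the optimal full-erasure unitary (which maps the joint state to |φ_1⟩⟨φ_1| ⊗ ρ'_R with ρ'_R obtained by grouping the Gibbs probabilities into blocks of size d_O), the heat dissipated is ΔQ = (ω(d_O − 1)/2)·coth(βω/2), and this strictly exceeds (d_O − 1)/β. -/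
open Finset Real

/-- Hyperbolic cotangent. -/
noncomputable def coth (x : ℝ) : ℝ := Real.cosh x / Real.sinh x

/-!
Writing `q = e^{-βω}`, the Gibbs weights are `r_m = (1 - q) q^m`, with mean level
`M = q / (1 - q)`. Block `m` of the erased reservoir consists of the levels `d m, …, d m + d - 1`,
whose average is `d m + (d - 1) / 2`, so the heat is `ω (d m + (d-1)/2)` averaged minus `ω m`
averaged, i.e. `ω (d - 1) (M + 1/2)`. Since `M + 1/2 = coth(βω/2) / 2`, this is the closed form,
and the bound is `coth x > 1/x` for `x > 0`, equivalently `sinh x < x cosh x`.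
-/

lemma sum_range_block_levels (d : ℕ) (x : ℝ) :
    ∑ j ∈ range d, ((d : ℝ) * (x + 1) - j - 1) = (d : ℝ) ^ 2 * x + d * (d - 1) / 2 := by
  have gauss : ∑ j ∈ range d, (j : ℝ) = d * (d - 1) / 2 := by
    induction d with
    | zero => simp
    | succ k ih => rw [sum_range_succ, ih]; push_cast; ring
  simp only [sum_sub_distrib, sum_const, card_range, nsmul_eq_mul, gauss]
  ring

lemma block_erasure_heat_eq {r : ℕ → ℝ} {M : ℝ} (hr : HasSum r 1)
    (hM : HasSum (fun m => r m * m) M) {d : ℕ} (hd : d ≠ 0) (ω : ℝ) :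
    (1 / (d : ℝ)) * (∑' m : ℕ, r m * ∑ j ∈ range d, ω * ((d : ℝ) * (m + 1) - j - 1))
      - ∑' m : ℕ, r m * (ω * m) = ω * ((d : ℝ) - 1) * (M + 1 / 2) := by
  have blocks : HasSum (fun m : ℕ => r m * ∑ j ∈ range d, ω * ((d : ℝ) * (m + 1) - j - 1))
      (ω * (d : ℝ) ^ 2 * M + ω * (d * (d - 1) / 2) * 1) := by
    refine ((hM.mul_left (ω * (d : ℝ) ^ 2)).add (hr.mul_left _)).congr_fun fun m => ?_
    rw [← mul_sum, sum_range_block_levels]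
    ring
  have levels : HasSum (fun m : ℕ => r m * (ω * m)) (ω * M) :=
    (hM.mul_left ω).congr_fun fun m => by ring
  rw [blocks.tsum_eq, levels.tsum_eq]
  field_simp
  ring

lemma hasSum_geometric_distribution {q : ℝ} (hq₀ : 0 ≤ q) (hq₁ : q < 1) :
    HasSum (fun m : ℕ => q ^ m * (1 - q)) 1 := by
  simpa [inv_mul_cancel₀ (sub_pos.2 hq₁).ne'] using
    (hasSum_geometric_of_lt_one hq₀ hq₁).mul_right (1 - q)

lemma hasSum_geometric_distribution_mean {q : ℝ} (hq₀ : 0 ≤ q) (hq₁ : q < 1) :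
    HasSum (fun m : ℕ => q ^ m * (1 - q) * m) (q / (1 - q)) := by
  have hnorm : ‖q‖ < 1 := by rwa [Real.norm_of_nonneg hq₀]
  have mean : q / (1 - q) ^ 2 * (1 - q) = q / (1 - q) := by
    field_simp [(sub_pos.2 hq₁).ne']
  refine (mean ▸ (hasSum_coe_mul_geometric_of_norm_lt_one hnorm).mul_right (1 - q)).congr_fun
    fun m => by ring

lemma coth_half_eq (x : ℝ) : coth (x / 2) = (1 + exp (-x)) / (1 - exp (-x)) := by
  have inv : exp (x / 2) * exp (-(x / 2)) = 1 := by rw [← exp_add]; simp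
  have sq : exp (-x) = exp (-(x / 2)) ^ 2 := by rw [sq, ← exp_add]; ring_nf
  rw [coth, cosh_eq, sinh_eq, sq,
    ← mul_div_mul_left _ _ (mul_ne_zero two_ne_zero (exp_pos (-(x / 2))).ne')]
  congr 1 <;> linear_combination inv

lemma sinh_lt_mul_cosh {x : ℝ} (hx : 0 < x) : sinh x < x * cosh x := by
  have mono : StrictMonoOn (fun y => y * cosh y - sinh y) (Set.Ici 0) := by
    refine strictMonoOn_of_deriv_pos (convex_Ici 0) (by fun_prop) fun y hy => ?_
    rw [interior_Ici, Set.mem_Ioi] at hy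
    have hderiv : HasDerivAt (fun y => y * cosh y - sinh y) (1 * cosh y + y * sinh y - cosh y) y :=
      ((hasDerivAt_id y).mul (hasDerivAt_cosh y)).sub (hasDerivAt_sinh y)
    rw [hderiv.deriv]
    nlinarith [sinh_pos_iff.2 hy]
  simpa using mono Set.self_mem_Ici (Set.mem_Ici.2 hx.le) hx

lemma one_div_lt_coth {x : ℝ} (hx : 0 < x) : 1 / x < coth x := by
  rw [coth, div_lt_div_iff₀ hx (sinh_pos_iff.2 hx)]
  linarith [sinh_lt_mul_cosh hx]

/-- **Heat of full erasure of a maximally mixed qudit with a harmonic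
oscillator reservoir**: with 0-based reservoir levels `λ_k = ωk` and Gibbs
probabilities `r_m = e^{-βωm}(1 − e^{-βω})`, the heat
`ΔQ = (1/d_O)Σ_m r_m Σ_{j<d_O} λ_{d_O(m+1)−j−1} − Σ_m r_m λ_m` equals
`(ω(d_O−1)/2)·coth(βω/2)` and strictly exceeds `(d_O−1)/β`. -/
theorem qudit_erasure_heat_harmonic_oscillator (dO : ℕ) (hdO : 2 ≤ dO)
    (β ω : ℝ) (hβ : 0 < β) (hω : 0 < ω)
    (r : ℕ → ℝ) (hr : ∀ m, r m = Real.exp (-(β * ω) * m) * (1 - Real.exp (-(β * ω))))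
    (ΔQ : ℝ)
    (hΔQ : ΔQ = (1 / (dO : ℝ)) *
        (∑' m : ℕ, r m * ∑ j ∈ Finset.range dO, ω * ((dO : ℝ) * (m + 1) - j - 1))
      - ∑' m : ℕ, r m * (ω * m)) :
    ΔQ = ω * ((dO : ℝ) - 1) / 2 * coth (β * ω / 2) ∧
      ((dO : ℝ) - 1) / β < ΔQ := by
  set q := exp (-(β * ω))
  have hq₀ : 0 ≤ q := (exp_pos _).le
  have hq₁ : q < 1 := exp_lt_one_iff.2 (by nlinarith)
  have hr_geom : r = fun m => q ^ m * (1 - q) :=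
    funext fun m => by rw [hr, ← exp_nat_mul]; ring_nf
  have heat : ΔQ = ω * ((dO : ℝ) - 1) * (q / (1 - q) + 1 / 2) := by
    rw [hΔQ, hr_geom]
    exact block_erasure_heat_eq (hasSum_geometric_distribution hq₀ hq₁)
      (hasSum_geometric_distribution_mean hq₀ hq₁) (by omega) ω
  have closed : ΔQ = ω * ((dO : ℝ) - 1) / 2 * coth (β * ω / 2) := by
    rw [heat, show coth (β * ω / 2) = (1 + q) / (1 - q) from coth_half_eq _]
    field_simp [(sub_pos.2 hq₁).ne']
    ring
  refine ⟨closed, ?_⟩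
  have hdO₁ : (0 : ℝ) < dO - 1 := sub_pos.2 (by exact_mod_cast hdO)
  calc ((dO : ℝ) - 1) / β = ω * ((dO : ℝ) - 1) / 2 * (1 / (β * ω / 2)) := by field_simp
    _ < ω * ((dO : ℝ) - 1) / 2 * coth (β * ω / 2) :=
      mul_lt_mul_of_pos_left (one_div_lt_coth (by positivity)) (by positivity)
    _ = ΔQ := closed.symm
end

section
/- For a qubit with initial state ρ_O = q|φ_1⟩⟨φ_1| + (1−q)|φ_2⟩⟨φ_2|, q ∈ (1/2, 1), fully erased using a continuous-spectrum infinite reservoir at inverse temperature β, the optimal heat dissipation ΔQ = 2q(1−q)log(q/(1−q)) / (β(2q−1)) strictly exceeds ΔS/β, where ΔS = −q log q − (1−q) log(1−q) is the entropy reduction; i.e. β·ΔQ − ΔS > 0 for all q ∈ (1/2, 1). -/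
/-!
Multiplying by `2q - 1 > 0`, the gap between the two sides becomes `q log q - (1-q) log(1-q)`.
The function `g x = x log x - (1-x) log(1-x)` vanishes at `1/2` and `1`, and its derivative
`log (x (1-x)) + 2` is strictly decreasing on `(1/2, 1)`; so `g` is strictly concave on
`[1/2, 1]` and hence positive in between.
-/

open Real Set

lemma hasDerivAt_mul_log_sub_one_sub_mul_log {x : ℝ} (hx₀ : x ≠ 0) (hx₁ : 1 - x ≠ 0) :
    HasDerivAt (fun y ↦ y * log y - (1 - y) * log (1 - y)) (log (x * (1 - x)) + 2) x := by
  have h : HasDerivAt (fun y ↦ y * log y - (1 - y) * log (1 - y))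
      (log x + 1 - (log (1 - x) + 1) * -1) x :=
    (hasDerivAt_mul_log hx₀).sub
      ((hasDerivAt_mul_log hx₁).comp x ((hasDerivAt_id x).const_sub 1))
  rw [log_mul hx₀ hx₁]
  convert h using 1
  ring

lemma strictConcaveOn_mul_log_sub_one_sub_mul_log :
    StrictConcaveOn ℝ (Icc (1 / 2) 1) (fun x ↦ x * log x - (1 - x) * log (1 - x)) := by
  refine StrictAntiOn.strictConcaveOn_of_deriv (convex_Icc _ _) ?_ ?_
  · exact (continuous_mul_log.sub (continuous_mul_log.comp (continuous_sub_left 1))).continuousOn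
  rw [interior_Icc]
  intro x ⟨hx₁, hx₂⟩ y ⟨hy₁, hy₂⟩ hxy
  rw [(hasDerivAt_mul_log_sub_one_sub_mul_log (by linarith) (by linarith)).deriv,
    (hasDerivAt_mul_log_sub_one_sub_mul_log (by linarith) (by linarith)).deriv]
  have hprod : y * (1 - y) < x * (1 - x) := by nlinarith
  have := log_lt_log (by nlinarith) hprod
  linarith

lemma one_sub_mul_log_one_sub_lt_mul_log {q : ℝ} (hq₁ : 1 / 2 < q) (hq₂ : q < 1) :
    (1 - q) * log (1 - q) < q * log q := by
  have hseg : q ∈ openSegment ℝ (1 / 2 : ℝ) 1 := by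
    rw [openSegment_eq_Ioo (by norm_num)]
    exact ⟨hq₁, hq₂⟩
  have h := strictConcaveOn_mul_log_sub_one_sub_mul_log.lt_on_openSegment
    (by norm_num) (by norm_num) (by norm_num) hseg
  norm_num at h
  linarith

/-- **Landauer's limit is strictly exceeded for biased-qubit erasure**: for
`q ∈ (1/2, 1)`, the optimal heat `β·ΔQ = 2q(1−q)log(q/(1−q))/(2q−1)` strictly
exceeds the entropy reduction `ΔS = −q log q − (1−q)log(1−q)`; equivalently
with `ΔQ = 2q(1−q)log(q/(1−q))/(β(2q−1))` one has `β·ΔQ − ΔS > 0`. -/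
theorem biased_qubit_exceeds_landauer (q : ℝ) (hq1 : 1/2 < q) (hq2 : q < 1) :
    -(q * Real.log q) - (1 - q) * Real.log (1 - q)
      < 2 * q * (1 - q) * Real.log (q / (1 - q)) / (2 * q - 1) := by
  have hgap := one_sub_mul_log_one_sub_lt_mul_log hq1 hq2
  rw [log_div (by linarith) (by linarith), lt_div_iff₀ (by linarith)]
  nlinarith
end

section
/- Let ρ be a density operator on ℂ^{d_O} ⊗ ℂ^{d_A}. There exists a unitary U on ℂ^{d_O} ⊗ ℂ^{d_A} and a unit vector |φ_1⟩ ∈ ℂ^{d_O} such that Tr_A[UρU†] = |φ_1⟩⟨φ_1| if and only if rank(ρ) ≤ d_A. -/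
open Finset Matrix
open scoped ComplexOrder

/-- Partial trace over the second (auxiliary) factor. -/
noncomputable def ptraceA {dO dA : ℕ}
    (M : Matrix (Fin dO × Fin dA) (Fin dO × Fin dA) ℂ) :
    Matrix (Fin dO) (Fin dO) ℂ :=
  Matrix.of fun i j => ∑ k : Fin dA, M (i, k) (j, k)

/-!
If `Tr_A[M] = |φ⟩⟨φ|` for a positive semidefinite `M`, then for `v ⊥ φ` the quadratic forms
`⟨v ⊗ eₖ, M (v ⊗ eₖ)⟩` are nonnegative and sum over `k` to `⟨v, |φ⟩⟨φ| v⟩ = 0`, so every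
`v ⊗ eₖ` lies in `ker M`. Thus `ker (⟨φ| ⊗ 1) ≤ ker M` and `rank M ≤ rank (⟨φ| ⊗ 1) ≤ d_A`;
unitary conjugation does not change the rank. Conversely, diagonalize `ρ` and permute the
eigenbasis so that the at most `d_A` nonzero eigenvalues land on the indices `(z, k)` for one
fixed `z`; the partial trace of that diagonal matrix is `|z⟩⟨z|`, as the eigenvalues sum to
`Tr ρ = 1`.
-/

theorem LinearMap.finrank_range_le_of_ker_le {K V W W' : Type*} [Field K]
    [AddCommGroup V] [Module K V] [FiniteDimensional K V] [AddCommGroup W] [Module K W]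
    [AddCommGroup W'] [Module K W'] {f : V →ₗ[K] W} {g : V →ₗ[K] W'}
    (h : LinearMap.ker f ≤ LinearMap.ker g) :
    Module.finrank K (LinearMap.range g) ≤ Module.finrank K (LinearMap.range f) := by
  have := Submodule.finrank_mono h
  have := f.finrank_range_add_finrank_ker
  have := g.finrank_range_add_finrank_ker
  omega

theorem Matrix.rank_le_rank_of_mulVec_eq_zero {m n p K : Type*} [Field K] [Fintype n]
    {A : Matrix m n K} {B : Matrix p n K} (h : ∀ x, A *ᵥ x = 0 → B *ᵥ x = 0) :
    B.rank ≤ A.rank :=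
  LinearMap.finrank_range_le_of_ker_le fun x hx => h x hx

theorem Matrix.rank_unitary_conj {n α : Type*} [Fintype n] [DecidableEq n] [CommRing α]
    [StarRing α] {U : Matrix n n α} (hU : U ∈ unitaryGroup n α) (A : Matrix n n α) :
    (U * A * Uᴴ).rank = A.rank := by
  rw [← star_eq_conjTranspose]
  exact (rank_mul_eq_left_of_isUnit_det _ _ (UnitaryGroup.det_isUnit (star ⟨U, hU⟩))).trans
    (rank_mul_eq_right_of_isUnit_det _ _ (UnitaryGroup.det_isUnit ⟨U, hU⟩))

theorem Matrix.trace_unitary_conj {n α : Type*} [Fintype n] [DecidableEq n] [CommRing α]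
    [StarRing α] {U : Matrix n n α} (hU : U ∈ unitaryGroup n α) (A : Matrix n n α) :
    (U * A * Uᴴ).trace = A.trace := by
  rw [trace_mul_cycle, ← star_eq_conjTranspose, mem_unitaryGroup_iff'.mp hU, one_mul]

theorem Matrix.submatrix_mem_unitaryGroup {n α : Type*} [Fintype n] [DecidableEq n]
    [CommRing α] [StarRing α] {U : Matrix n n α} (hU : U ∈ unitaryGroup n α)
    (σ : Equiv.Perm n) : U.submatrix σ id ∈ unitaryGroup n α := by
  rw [mem_unitaryGroup_iff', star_eq_conjTranspose, conjTranspose_submatrix,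
    submatrix_mul_equiv _ _ _ σ, ← star_eq_conjTranspose, mem_unitaryGroup_iff'.mp hU,
    submatrix_id_id]

theorem Matrix.submatrix_mul_mul_conjTranspose_submatrix {n α : Type*} [Fintype n]
    [CommRing α] [StarRing α] (U A : Matrix n n α) (σ : Equiv.Perm n) :
    U.submatrix σ id * A * (U.submatrix σ id)ᴴ = (U * A * Uᴴ).submatrix σ σ := by
  rw [conjTranspose_submatrix, submatrix_mul _ _ _ _ _ Function.bijective_id,
    submatrix_mul _ _ _ _ _ Function.bijective_id, submatrix_id_id]

theorem Finset.exists_perm_mapsTo_of_card_le {ι : Type*} [Fintype ι] [DecidableEq ι]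
    {S T : Finset ι} (h : #S ≤ #T) : ∃ σ : Equiv.Perm ι, ∀ i ∈ S, σ i ∈ T := by
  obtain ⟨T', hT'T, hcard⟩ := exists_subset_card_eq h
  let e : S ≃ T' := equivOfCardEq hcard.symm
  exact ⟨e.extendSubtype, fun i hi => hT'T (e.extendSubtype_mem i hi)⟩

theorem Matrix.IsHermitian.exists_unitary_conj_eq_diagonal_of_rank_le {n 𝕜 : Type*}
    [Fintype n] [DecidableEq n] [RCLike 𝕜] {A : Matrix n n 𝕜} (hA : A.IsHermitian)
    {T : Finset n} (hT : A.rank ≤ #T) :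
    ∃ U ∈ unitaryGroup n 𝕜, ∃ d : n → 𝕜, U * A * Uᴴ = diagonal d ∧ ∀ i ∉ T, d i = 0 := by
  set V : Matrix n n 𝕜 := (hA.eigenvectorUnitary : Matrix n n 𝕜)
  have hdiag : Vᴴ * A * Vᴴᴴ = diagonal (RCLike.ofReal ∘ hA.eigenvalues) := by
    simpa [V, star_eq_conjTranspose] using hA.conjStarAlgAut_star_eigenvectorUnitary
  have hS : #{i | hA.eigenvalues i ≠ 0} ≤ #T := by
    rwa [← Fintype.card_subtype, ← hA.rank_eq_card_non_zero_eigs]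
  obtain ⟨σ, hσ⟩ := exists_perm_mapsTo_of_card_le hS
  refine ⟨(star V).submatrix σ.symm id,
    submatrix_mem_unitaryGroup (star hA.eigenvectorUnitary).2 _,
    (RCLike.ofReal ∘ hA.eigenvalues) ∘ σ.symm, ?_, fun i hi => ?_⟩
  · rw [submatrix_mul_mul_conjTranspose_submatrix, star_eq_conjTranspose, hdiag,
      submatrix_diagonal_equiv]
  · by_contra h
    exact hi (by simpa using hσ (σ.symm i) (by simpa using h))

section TensorSingle

variable {m n : Type*} [DecidableEq n]

/-- The vector `v ⊗ eₖ`. -/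
def tensorSingle (v : m → ℂ) (k : n) : m × n → ℂ :=
  fun p => if p.2 = k then v p.1 else 0

/-- The matrix of `⟨φ| ⊗ 1`. -/
def partialBra (φ : m → ℂ) : Matrix n (m × n) ℂ :=
  of fun k => star (tensorSingle φ k)

theorem star_tensorSingle_dotProduct [Fintype m] [Fintype n] (v : m → ℂ) (k : n)
    (x : m × n → ℂ) :
    star (tensorSingle v k) ⬝ᵥ x = star v ⬝ᵥ fun i => x (i, k) := by
  simp [tensorSingle, dotProduct, Fintype.sum_prod_type, apply_ite (star : ℂ → ℂ)]

theorem sum_tensorSingle_slice [Fintype n] (x : m × n → ℂ) :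
    ∑ k, tensorSingle (fun i => x (i, k)) k = x := by
  funext p
  simp [tensorSingle, Finset.sum_apply]

theorem outer_mulVec [Fintype m] (φ v : m → ℂ) : outer φ *ᵥ v = (star φ ⬝ᵥ v) • φ := by
  funext i
  simp [outer, mulVec, dotProduct, Finset.mul_sum, mul_comm, mul_left_comm]

end TensorSingle

theorem star_dotProduct_ptraceA_mulVec {dO dA : ℕ}
    (M : Matrix (Fin dO × Fin dA) (Fin dO × Fin dA) ℂ) (v w : Fin dO → ℂ) :
    star v ⬝ᵥ (ptraceA M *ᵥ w) = ∑ k, star (tensorSingle v k) ⬝ᵥ (M *ᵥ tensorSingle w k) := by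
  simp only [dotProduct, mulVec, ptraceA, of_apply, tensorSingle, Pi.star_apply,
    apply_ite (star : ℂ → ℂ), star_zero, Fintype.sum_prod_type, ite_mul, zero_mul, mul_ite,
    mul_zero, Finset.sum_ite_irrel, Finset.sum_const_zero, Finset.sum_ite_eq', Finset.mem_univ,
    if_true, Finset.sum_mul, Finset.mul_sum]
  exact (Finset.sum_congr rfl fun _ _ => Finset.sum_comm).trans Finset.sum_comm

theorem Matrix.PosSemidef.mulVec_tensorSingle_eq_zero_of_ptraceA_eq_outer {dO dA : ℕ}
    {M : Matrix (Fin dO × Fin dA) (Fin dO × Fin dA) ℂ} (hM : M.PosSemidef) {φ : Fin dO → ℂ}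
    (hpt : ptraceA M = outer φ) {v : Fin dO → ℂ} (hv : star φ ⬝ᵥ v = 0) (k : Fin dA) :
    M *ᵥ tensorSingle v k = 0 := by
  have hsum : ∑ k, star (tensorSingle v k) ⬝ᵥ (M *ᵥ tensorSingle v k) = 0 := by
    rw [← star_dotProduct_ptraceA_mulVec, hpt, outer_mulVec, hv, zero_smul, dotProduct_zero]
  have hk := (Finset.sum_eq_zero_iff_of_nonneg fun k _ =>
    hM.dotProduct_mulVec_nonneg (tensorSingle v k)).mp hsum k (mem_univ k)
  exact (hM.dotProduct_mulVec_zero_iff _).mp hk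

theorem Matrix.PosSemidef.rank_le_of_ptraceA_eq_outer {dO dA : ℕ}
    {M : Matrix (Fin dO × Fin dA) (Fin dO × Fin dA) ℂ} (hM : M.PosSemidef) {φ : Fin dO → ℂ}
    (hpt : ptraceA M = outer φ) : M.rank ≤ dA := by
  have hker : ∀ x, partialBra φ *ᵥ x = 0 → M *ᵥ x = 0 := by
    intro x hx
    rw [← sum_tensorSingle_slice x, mulVec_sum]
    refine Finset.sum_eq_zero fun k _ =>
      hM.mulVec_tensorSingle_eq_zero_of_ptraceA_eq_outer hpt ?_ k
    rw [← star_tensorSingle_dotProduct]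
    exact congrFun hx k
  calc M.rank ≤ (partialBra φ).rank := rank_le_rank_of_mulVec_eq_zero hker
    _ ≤ dA := (rank_le_card_height _).trans_eq (Fintype.card_fin dA)

theorem outer_single_one {n : Type*} [DecidableEq n] (z : n) :
    outer (Pi.single z (1 : ℂ)) = diagonal (Pi.single z 1) := by
  ext i j
  simp only [outer, of_apply, diagonal_apply, Pi.single_apply]
  split_ifs <;> simp_all

theorem ptraceA_diagonal {dO dA : ℕ} (d : Fin dO × Fin dA → ℂ) :
    ptraceA (diagonal d) = diagonal fun i => ∑ k, d (i, k) := by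
  ext i j
  by_cases hij : i = j <;> simp [ptraceA, hij]

theorem ptraceA_diagonal_eq_outer_single {dO dA : ℕ} {d : Fin dO × Fin dA → ℂ} {z : Fin dO}
    (hd : ∀ p : Fin dO × Fin dA, p.1 ≠ z → d p = 0) (hsum : ∑ p, d p = 1) :
    ptraceA (diagonal d) = outer (Pi.single z 1) := by
  rw [ptraceA_diagonal, outer_single_one]
  congr 1
  funext i
  by_cases hi : i = z
  · subst hi
    rw [Pi.single_eq_same, ← hsum, Fintype.sum_prod_type,
      Finset.sum_eq_single i (fun j _ hj => sum_eq_zero fun k _ => hd (j, k) hj) (by simp)]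
  · rw [Pi.single_eq_of_ne hi, sum_eq_zero fun k _ => hd (i, k) hi]

/-- **Rank criterion for full erasure with an auxiliary system**: a density
operator `ρ` on `ℂ^{d_O} ⊗ ℂ^{d_A}` admits a unitary `U` and a unit vector
`|φ_1⟩` with `Tr_A[UρU†] = |φ_1⟩⟨φ_1|` if and only if `rank ρ ≤ d_A`. -/
theorem full_erasure_iff_rank_le {dO dA : ℕ}
    (ρ : Matrix (Fin dO × Fin dA) (Fin dO × Fin dA) ℂ)
    (hρ : ρ.PosSemidef) (htr : ρ.trace = 1) :
    (∃ U ∈ Matrix.unitaryGroup (Fin dO × Fin dA) ℂ,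
      ∃ φ1 : Fin dO → ℂ, star φ1 ⬝ᵥ φ1 = 1 ∧
        ptraceA (U * ρ * Uᴴ) = outer φ1) ↔ ρ.rank ≤ dA := by
  constructor
  · rintro ⟨U, hU, φ1, -, hpt⟩
    rw [← rank_unitary_conj hU ρ]
    exact (hρ.mul_mul_conjTranspose_same U).rank_le_of_ptraceA_eq_outer hpt
  · intro h
    obtain ⟨⟨z, -⟩⟩ : Nonempty (Fin dO × Fin dA) := by
      by_contra hempty
      rw [not_nonempty_iff] at hempty
      simp [trace] at htr
    have hT : ρ.rank ≤ #({z} ×ˢ univ : Finset (Fin dO × Fin dA)) := by simpa using h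
    obtain ⟨U, hU, d, hUd, hd⟩ := hρ.isHermitian.exists_unitary_conj_eq_diagonal_of_rank_le hT
    have hrow : ∀ p : Fin dO × Fin dA, p.1 ≠ z → d p = 0 := fun p hp =>
      hd p (by rw [mem_product, mem_singleton]; exact fun h => hp h.1)
    have hsum : ∑ p, d p = 1 := by
      rw [← trace_diagonal, ← hUd, trace_unitary_conj hU, htr]
    refine ⟨U, hU, Pi.single z 1, by simp, ?_⟩
    rw [hUd]
    exact ptraceA_diagonal_eq_outer_single hrow hsum
end

section
/- If a bipartite system O+A has a maximally mixed (trivial-Hamiltonian Gibbs) state on A, i.e. ρ = (1/d_A)·1_A ⊗ ρ_O, then for every unitary U on ℂ^{d_O} ⊗ ℂ^{d_A}, the largest eigenvalue of Tr_A[UρU†] is at most the largest eigenvalue of ρ_O; hence no unitary acting on O+A alone can increase the probability of preparing O in any fixed pure state. -/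
/-!
Write `o` for the largest eigenvalue of `ρ_O`, so that `o • 1 - ρ_O ≥ 0`. Tensoring with
`(1/d_A) • 1` gives `(o/d_A) • 1 - ρ ≥ 0`, and conjugating by `U` gives `(o/d_A) • 1 - UρU† ≥ 0`.
The partial trace is a sum of compressions, hence positive, and sends `(o/d_A) • 1` to `o • 1`;
so `o • 1 - Tr_A[UρU†] ≥ 0`, which evaluated at the unit vector `ψ` is the claim.
-/

open Finset Matrix
open scoped Kronecker ComplexOrder

theorem Matrix.sub_kronecker {R l m n p : Type*} [Ring R] (A B : Matrix l m R)
    (C : Matrix n p R) : (A - B) ⊗ₖ C = A ⊗ₖ C - B ⊗ₖ C := by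
  ext ⟨i, k⟩ ⟨j, l⟩
  simp [sub_mul]

section

variable {𝕜 m n : Type*} [RCLike 𝕜] [Fintype n] [DecidableEq n]

open scoped MatrixOrder in
theorem Matrix.IsHermitian.posSemidef_smul_one_sub {A : Matrix n n 𝕜} (hA : A.IsHermitian)
    {c : ℝ} (hc : ∀ i, hA.eigenvalues i ≤ c) : ((c : 𝕜) • 1 - A).PosSemidef := by
  have hA_le : A ≤ algebraMap ℝ (Matrix n n 𝕜) c := by
    refine le_algebraMap_of_spectrum_le fun x hx => ?_
    rw [hA.spectrum_real_eq_range_eigenvalues] at hx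
    obtain ⟨i, rfl⟩ := hx
    exact hc i
  simpa [Matrix.le_iff, Algebra.algebraMap_eq_smul_one] using hA_le

theorem Matrix.PosSemidef.smul_one_sub_kronecker_smul_one [Fintype m] [DecidableEq m]
    {A : Matrix m m 𝕜} {c : 𝕜} (hA : (c • 1 - A).PosSemidef) {t : 𝕜} (ht : 0 ≤ t) :
    ((c * t) • 1 - A ⊗ₖ (t • 1 : Matrix n n 𝕜)).PosSemidef := by
  have h := hA.kronecker ((PosSemidef.one : (1 : Matrix n n 𝕜).PosSemidef).smul ht)
  rwa [sub_kronecker, smul_kronecker, kronecker_smul, one_kronecker_one, smul_smul] at h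

theorem Matrix.PosSemidef.smul_one_sub_unitary_conj {A U : Matrix n n 𝕜} {c : 𝕜}
    (hA : (c • 1 - A).PosSemidef) (hU : U ∈ unitaryGroup n 𝕜) :
    (c • 1 - U * A * Uᴴ).PosSemidef := by
  have hUU : U * Uᴴ = 1 := mem_unitaryGroup_iff.mp hU
  simpa [mul_sub, sub_mul, hUU] using hA.mul_mul_conjTranspose_same U

theorem Matrix.PosSemidef.re_dotProduct_mulVec_le {A : Matrix n n 𝕜} {c : ℝ}
    (hA : ((c : 𝕜) • 1 - A).PosSemidef) {x : n → 𝕜} (hx : star x ⬝ᵥ x = 1) :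
    RCLike.re (star x ⬝ᵥ A *ᵥ x) ≤ c := by
  have h := hA.re_dotProduct_nonneg x
  simp only [sub_mulVec, smul_mulVec, one_mulVec, dotProduct_sub, dotProduct_smul, hx,
    smul_eq_mul, mul_one, map_sub, RCLike.ofReal_re] at h
  linarith

end

section

variable {dO dA : ℕ}

theorem ptraceA_eq_sum_submatrix (M : Matrix (Fin dO × Fin dA) (Fin dO × Fin dA) ℂ) :
    ptraceA M = ∑ k : Fin dA, M.submatrix (·, k) (·, k) := by
  ext i j
  simp [ptraceA, Matrix.sum_apply]

theorem Matrix.PosSemidef.ptraceA {M : Matrix (Fin dO × Fin dA) (Fin dO × Fin dA) ℂ}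
    (hM : M.PosSemidef) : (ptraceA M).PosSemidef := by
  rw [ptraceA_eq_sum_submatrix]
  exact posSemidef_sum _ fun k _ => hM.submatrix _

theorem ptraceA_smul_one_sub (c : ℂ) (M : Matrix (Fin dO × Fin dA) (Fin dO × Fin dA) ℂ) :
    ptraceA (c • 1 - M) = ((dA : ℂ) * c) • 1 - ptraceA M := by
  ext i j
  simp only [ptraceA, of_apply, Matrix.sub_apply, Matrix.smul_apply, one_apply, smul_eq_mul,
    sum_sub_distrib, Prod.mk.injEq]
  by_cases h : i = j <;> simp [h, mul_comm]

end

theorem no_erasure_with_maximally_mixed_auxiliary_general {dO dA : ℕ} (hdO : 0 < dO)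
    (hdA : 0 < dA)
    (ρO : Matrix (Fin dO) (Fin dO) ℂ) (hρO : ρO.IsHermitian)
    (ρ : Matrix (Fin dO × Fin dA) (Fin dO × Fin dA) ℂ)
    (hρ : ρ = ρO ⊗ₖ (((dA : ℂ)⁻¹ : ℂ) • (1 : Matrix (Fin dA) (Fin dA) ℂ))) :
    ∀ U ∈ Matrix.unitaryGroup (Fin dO × Fin dA) ℂ,
      ∀ ψ : Fin dO → ℂ, star ψ ⬝ᵥ ψ = 1 →
        (star ψ ⬝ᵥ (ptraceA (U * ρ * Uᴴ)).mulVec ψ).re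
          ≤ Finset.univ.sup' (Finset.univ_nonempty_iff.mpr ⟨⟨0, hdO⟩⟩)
              hρO.eigenvalues := by
  intro U hU ψ hψ
  set o := Finset.univ.sup' (Finset.univ_nonempty_iff.mpr ⟨⟨0, hdO⟩⟩) hρO.eigenvalues
  have hρO_le : ((o : ℂ) • 1 - ρO).PosSemidef :=
    hρO.posSemidef_smul_one_sub fun i => le_sup' _ (mem_univ i)
  have hρ_le : (((o : ℂ) * (dA : ℂ)⁻¹) • 1 - ρ).PosSemidef :=
    hρ ▸ hρO_le.smul_one_sub_kronecker_smul_one (by positivity)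
  have hdA_mul : (dA : ℂ) * ((o : ℂ) * (dA : ℂ)⁻¹) = o := by
    field_simp [Nat.cast_ne_zero.mpr hdA.ne']
  have htr_le := (hρ_le.smul_one_sub_unitary_conj hU).ptraceA
  rw [ptraceA_smul_one_sub, hdA_mul] at htr_le
  exact htr_le.re_dotProduct_mulVec_le hψ

/-- **No erasure with a maximally mixed auxiliary**: if
`ρ = ρ_O ⊗ (1/d_A)·1_A`, then for every unitary `U` on `ℂ^{d_O} ⊗ ℂ^{d_A}`
and every unit vector `|ψ⟩ ∈ ℂ^{d_O}`, the probability
`⟨ψ|Tr_A[UρU†]|ψ⟩` is at most the largest eigenvalue of `ρ_O`. -/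
theorem no_erasure_with_maximally_mixed_auxiliary {dO dA : ℕ} (hdO : 0 < dO)
    (hdA : 0 < dA)
    (ρO : Matrix (Fin dO) (Fin dO) ℂ) (hρO : ρO.IsHermitian)
    (hρO_psd : ρO.PosSemidef) (hρO_tr : ρO.trace = 1)
    (ρ : Matrix (Fin dO × Fin dA) (Fin dO × Fin dA) ℂ)
    (hρ : ρ = ρO ⊗ₖ (((dA : ℂ)⁻¹ : ℂ) • (1 : Matrix (Fin dA) (Fin dA) ℂ))) :
    ∀ U ∈ Matrix.unitaryGroup (Fin dO × Fin dA) ℂ,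
      ∀ ψ : Fin dO → ℂ, star ψ ⬝ᵥ ψ = 1 →
        (star ψ ⬝ᵥ (ptraceA (U * ρ * Uᴴ)).mulVec ψ).re
          ≤ Finset.univ.sup' (Finset.univ_nonempty_iff.mpr ⟨⟨0, hdO⟩⟩)
              hρO.eigenvalues :=
  no_erasure_with_maximally_mixed_auxiliary_general hdO hdA ρO hρO ρ hρ
end
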